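/- arXiv:2302.03740 — 12 statements merged into one kernel-verified Lean document; each statement's English description precedes it below -/
import Mathlib

section
/- Let Y, G, U be random variables on a probability space taking values in countable sets, and let g̃ be a fixed value of G with P(G=g̃)>0. Assume (Assumption 1) there is a function c(u) such that P(G=g̃ | Y=y, U=u) = c(u) for every pair (y,u) with P(Y=y, U=u)>0. Assume further that either (Assumption 2) P(G=g̃ | U=u) takes the same value for all u with P(U=u)>0, or (Assumption 3) for each y the value P(Y=y | U=u) is the same for all u with P(U=u)>0. Then P(Y=y | G=g̃) = P(Y=y) for every y. -/
open MeasureTheory ENNReal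

/-- Decomposition of the measure of a set over the fibers of a countable-valued
measurable map. -/
lemma sum_fibers_aux {Ω α : Type*} [MeasurableSpace Ω]
    [MeasurableSpace α] [Countable α] [MeasurableSingletonClass α]
    (P : Measure Ω) (U : Ω → α) (hU : Measurable U)
    (S : Set Ω) (hS : MeasurableSet S) :
    P S = ∑' u : α, P (S ∩ U ⁻¹' {u}) := by
  have hset : S = ⋃ u : α, S ∩ U ⁻¹' {u} := by
    ext x; simp
  conv_lhs => rw [hset]
  refine measure_iUnion ?_ fun u => hS.inter (hU (measurableSet_singleton u))
  intro u v huv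
  refine Set.disjoint_left.2 ?_
  rintro x ⟨-, hx⟩ ⟨-, hx'⟩
  exact huv ((Set.mem_singleton_iff.1 hx).symm.trans (Set.mem_singleton_iff.1 hx'))

/-- **Theorem 2 of the paper** (weak, observed-pattern ignorability).  Let `Y`, `G`, `U`
be random variables taking values in countable sets, and let `gtil` be a fixed value of `G`
with `P(G = gtil) > 0`.  Assume (Assumption 1) there is a function `c(u)` with
`P(G=gtil | Y=y, U=u) = c(u)` whenever `P(Y=y, U=u) > 0`; and that either (Assumption 2)
`P(G=gtil | U=u)` takes the same value for all `u` with `P(U=u) > 0`, or (Assumption 3)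
for each `y`, `P(Y=y | U=u)` takes the same value for all `u` with `P(U=u) > 0`.
Then `P(Y=y | G=gtil) = P(Y=y)` for every `y`. -/
theorem weak_ignorability_unmeasured_confounding
    {Ω α β γ : Type*} [MeasurableSpace Ω]
    [MeasurableSpace α] [Countable α] [MeasurableSingletonClass α]
    [MeasurableSpace β] [Countable β] [MeasurableSingletonClass β]
    [MeasurableSpace γ] [Countable γ] [MeasurableSingletonClass γ]
    (P : Measure Ω) [IsProbabilityMeasure P]
    (Y : Ω → β) (G : Ω → γ) (U : Ω → α)
    (hY : Measurable Y) (hG : Measurable G) (hU : Measurable U)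
    (gtil : γ) (hg : 0 < P (G ⁻¹' {gtil}))
    -- Assumption 1: observed ignorability
    (h1 : ∃ c : α → ℝ≥0∞, ∀ (y : β) (u : α), 0 < P (Y ⁻¹' {y} ∩ U ⁻¹' {u}) →
      P (G ⁻¹' {gtil} ∩ (Y ⁻¹' {y} ∩ U ⁻¹' {u})) / P (Y ⁻¹' {y} ∩ U ⁻¹' {u}) = c u)
    -- Assumption 2 or Assumption 3
    (h23 :
      (∀ u u' : α, 0 < P (U ⁻¹' {u}) → 0 < P (U ⁻¹' {u'}) →
          P (G ⁻¹' {gtil} ∩ U ⁻¹' {u}) / P (U ⁻¹' {u}) =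
            P (G ⁻¹' {gtil} ∩ U ⁻¹' {u'}) / P (U ⁻¹' {u'})) ∨
      (∀ (y : β) (u u' : α), 0 < P (U ⁻¹' {u}) → 0 < P (U ⁻¹' {u'}) →
          P (Y ⁻¹' {y} ∩ U ⁻¹' {u}) / P (U ⁻¹' {u}) =
            P (Y ⁻¹' {y} ∩ U ⁻¹' {u'}) / P (U ⁻¹' {u'}))) :
    ∀ y : β, P (Y ⁻¹' {y} ∩ G ⁻¹' {gtil}) / P (G ⁻¹' {gtil}) = P (Y ⁻¹' {y}) := by
  classical
  obtain ⟨c, hc⟩ := h1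
  set E : Set Ω := G ⁻¹' {gtil} with hEdef
  set A : β → Set Ω := fun y => Y ⁻¹' {y} with hAdef
  set B : α → Set Ω := fun u => U ⁻¹' {u} with hBdef
  have hEm : MeasurableSet E := hG (measurableSet_singleton gtil)
  have hAm : ∀ y, MeasurableSet (A y) := fun y => hY (measurableSet_singleton y)
  have hBm : ∀ u, MeasurableSet (B u) := fun u => hU (measurableSet_singleton u)
  -- Pointwise key identity.
  have key : ∀ (y : β) (u : α), P (E ∩ (A y ∩ B u)) = c u * P (A y ∩ B u) := by
    intro y u
    rcases eq_or_lt_of_le (zero_le : 0 ≤ P (A y ∩ B u)) with h0 | hpos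
    · have h0 : P (A y ∩ B u) = 0 := h0.symm
      rw [h0, mul_zero]
      exact measure_mono_null Set.inter_subset_right h0
    · have h := hc y u hpos
      have hne : P (A y ∩ B u) ≠ 0 := hpos.ne'
      have hnt : P (A y ∩ B u) ≠ ∞ := measure_ne_top P _
      have := (ENNReal.eq_div_iff hne hnt).1 h.symm
      rw [← this, mul_comm]
  -- Conditional on each fiber of U.
  have hEB : ∀ u, P (E ∩ B u) = c u * P (B u) := by
    intro u
    have h1' : P (E ∩ B u) = ∑' y : β, P (E ∩ B u ∩ A y) :=
      sum_fibers_aux P Y hY _ (hEm.inter (hBm u))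
    have h2' : P (B u) = ∑' y : β, P (B u ∩ A y) :=
      sum_fibers_aux P Y hY _ (hBm u)
    rw [h1', h2', ← ENNReal.tsum_mul_left]
    congr 1; ext y
    have hs1 : E ∩ B u ∩ A y = E ∩ (A y ∩ B u) := by
      ext x; simp only [Set.mem_inter_iff]; tauto
    have hs2 : B u ∩ A y = A y ∩ B u := Set.inter_comm _ _
    rw [hs1, hs2, key]
  -- Decompositions over fibers of U.
  have hAE : ∀ y, P (A y ∩ E) = ∑' u : α, c u * P (A y ∩ B u) := by
    intro y
    have := sum_fibers_aux P U hU (A y ∩ E) ((hAm y).inter hEm)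
    rw [this]
    congr 1; ext u
    have hs : A y ∩ E ∩ B u = E ∩ (A y ∩ B u) := by
      ext x; simp only [Set.mem_inter_iff]; tauto
    rw [hs, key]
  have hE : P E = ∑' u : α, c u * P (B u) := by
    rw [sum_fibers_aux P U hU E hEm]
    congr 1; ext u; exact hEB u
  have hA : ∀ y, P (A y) = ∑' u : α, P (A y ∩ B u) := fun y =>
    sum_fibers_aux P U hU (A y) (hAm y)
  have hBsum : (∑' u : α, P (B u)) = 1 := by
    have := sum_fibers_aux P U hU Set.univ MeasurableSet.univ
    simpa using this.symm
  have hEne : P E ≠ 0 := hg.ne'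
  have hEnt : P E ≠ ∞ := measure_ne_top P _
  -- Pick u₀ with positive mass contributing to P E.
  obtain ⟨u₀, hu₀⟩ : ∃ u : α, 0 < c u * P (B u) := by
    by_contra hcon
    push_neg at hcon
    have : P E = 0 := by
      rw [hE]
      exact ENNReal.tsum_eq_zero.2
        (fun u => le_antisymm (hcon u) zero_le)
    exact hEne this
  have hBu₀ : 0 < P (B u₀) := by
    rcases eq_or_lt_of_le (zero_le : 0 ≤ P (B u₀)) with h0 | h; · simp [← h0] at hu₀
    exact h
  have hcu₀ : 0 < c u₀ := by
    rcases eq_or_lt_of_le (zero_le : 0 ≤ c u₀) with h0 | h; · simp [← h0] at hu₀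
    exact h
  -- c u is finite whenever P (B u) > 0
  have hcfin : ∀ u, 0 < P (B u) → c u ≠ ∞ := by
    intro u hu hcinf
    have : P (E ∩ B u) = ∞ := by
      rw [hEB u, hcinf, ENNReal.top_mul hu.ne']
    exact (measure_ne_top P _) this
  -- ratio P(E∩Bu)/P(Bu) = c u for positive u
  have hratio : ∀ u, 0 < P (B u) → P (E ∩ B u) / P (B u) = c u := by
    intro u hu
    rw [hEB u, mul_div_assoc, ENNReal.div_self hu.ne' (measure_ne_top P _), mul_one]
  intro y
  rcases h23 with h2 | h3
  · -- Assumption 2: c u constant (= c u₀ =: k) on positive-mass u.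
    have hconst : ∀ u, 0 < P (B u) → c u = c u₀ := by
      intro u hu
      have := h2 u u₀ hu hBu₀
      rw [hratio u hu, hratio u₀ hBu₀] at this
      exact this
    have hEk : P E = c u₀ := by
      rw [hE]
      have : ∀ u : α, c u * P (B u) = c u₀ * P (B u) := by
        intro u
        rcases eq_or_lt_of_le (zero_le : 0 ≤ P (B u)) with h0 | h
        · rw [← h0, mul_zero, mul_zero]
        · rw [hconst u h]
      rw [tsum_congr this, ENNReal.tsum_mul_left, hBsum, mul_one]
    have hAEk : P (A y ∩ E) = c u₀ * P (A y) := by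
      rw [hAE y, hA y, ← ENNReal.tsum_mul_left]
      congr 1; ext u
      rcases eq_or_lt_of_le (zero_le : 0 ≤ P (B u)) with h0 | h
      · have : P (A y ∩ B u) = 0 :=
          measure_mono_null Set.inter_subset_right (le_antisymm (le_of_eq h0.symm) zero_le)
        rw [this, mul_zero, mul_zero]
      · rw [hconst u h]
    show P (A y ∩ E) / P E = P (A y)
    rw [hAEk, hEk, mul_comm, mul_div_assoc,
      ENNReal.div_self (hEk ▸ hEne) (hEk ▸ hEnt), mul_one]
  · -- Assumption 3: P(Ay ∩ Bu) = q y * P(Bu) for positive-mass u.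
    set q : β → ℝ≥0∞ := fun y => P (A y ∩ B u₀) / P (B u₀) with hqdef
    have hAB : ∀ u, P (A y ∩ B u) = q y * P (B u) := by
      intro u
      rcases eq_or_lt_of_le (zero_le : 0 ≤ P (B u)) with h0 | h
      · have h0' : P (B u) = 0 := h0.symm
        rw [h0', mul_zero]
        exact measure_mono_null Set.inter_subset_right h0'
      · have := h3 y u u₀ h hBu₀
        have hq : P (A y ∩ B u) / P (B u) = q y := this
        have := (ENNReal.eq_div_iff h.ne' (measure_ne_top P _)).1 hq.symm
        rw [← this, mul_comm]
    have hAq : P (A y) = q y := by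
      rw [hA y]
      have : ∀ u : α, P (A y ∩ B u) = q y * P (B u) := hAB
      rw [tsum_congr this, ENNReal.tsum_mul_left, hBsum, mul_one]
    have hAEq : P (A y ∩ E) = q y * P E := by
      rw [hAE y, hE, ← ENNReal.tsum_mul_left]
      congr 1; ext u
      rw [hAB u]; ring
    show P (A y ∩ E) / P E = P (A y)
    rw [hAEq, mul_div_assoc, ENNReal.div_self hEne hEnt, mul_one, hAq]
end

section
/- Let Y, G, U, X be random variables on a probability space taking values in countable sets, and let g̃ be a fixed value of G. Assume (Assumption 1) there is a function c(x,u) such that P(G=g̃ | Y=y, X=x, U=u) = c(x,u) for every (y,x,u) with P(Y=y, X=x, U=u)>0. Assume further that either (Assumption 2) for each x, P(G=g̃ | X=x, U=u) takes the same value for all u with P(X=x,U=u)>0, or (Assumption 3) for each x and y, P(Y=y | X=x, U=u) takes the same value for all u with P(X=x,U=u)>0. Then P(Y=y | X=x, G=g̃) = P(Y=y | X=x) for every y and every x with P(X=x, G=g̃)>0. -/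
open MeasureTheory ENNReal

/-- Partition a measurable set by the values of a countably-valued random variable. -/
lemma measure_eq_tsum_inter_preimage {Ω α : Type*} [MeasurableSpace Ω]
    [MeasurableSpace α] [Countable α] [MeasurableSingletonClass α]
    (P : Measure Ω) (U : Ω → α) (hU : Measurable U) (E : Set Ω) (hE : MeasurableSet E) :
    P E = ∑' u : α, P (E ∩ U ⁻¹' {u}) := by
  have h : E = ⋃ u, E ∩ U ⁻¹' {u} := by
    ext ω; simp
  nth_rewrite 1 [h]
  rw [measure_iUnion ?_ fun u => hE.inter (hU (measurableSet_singleton u))]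
  intro u v huv
  simp only [Function.onFun, Set.disjoint_left, Set.mem_inter_iff, Set.mem_preimage,
    Set.mem_singleton_iff]
  rintro ω ⟨_, hu⟩ ⟨_, hv⟩
  exact huv (hu.symm.trans hv)

/-- **Theorem 4 of the paper** (weak, observed-pattern ignorability with covariates).
Let `Y`, `G`, `U`, `X` take values in countable sets and let `gtil` be a fixed value of
`G`.  Assume (Assumption 1) there is a function `c(x,u)` with
`P(G=gtil | Y=y, X=x, U=u) = c(x,u)` whenever `P(Y=y, X=x, U=u) > 0`; and that either
(Assumption 2) for each `x`, `P(G=gtil | X=x, U=u)` is the same for all `u` with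
`P(X=x, U=u) > 0`, or (Assumption 3) for each `x` and `y`, `P(Y=y | X=x, U=u)` is the
same for all `u` with `P(X=x, U=u) > 0`.  Then `P(Y=y | X=x, G=gtil) = P(Y=y | X=x)`
for every `y` and every `x` with `P(X=x, G=gtil) > 0`. -/
theorem weak_ignorability_unmeasured_confounding_with_covariates
    {Ω α β γ χ : Type*} [MeasurableSpace Ω]
    [MeasurableSpace α] [Countable α] [MeasurableSingletonClass α]
    [MeasurableSpace β] [Countable β] [MeasurableSingletonClass β]
    [MeasurableSpace γ] [Countable γ] [MeasurableSingletonClass γ]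
    [MeasurableSpace χ] [Countable χ] [MeasurableSingletonClass χ]
    (P : Measure Ω) [IsProbabilityMeasure P]
    (Y : Ω → β) (G : Ω → γ) (U : Ω → α) (X : Ω → χ)
    (hY : Measurable Y) (hG : Measurable G) (hU : Measurable U) (hX : Measurable X)
    (gtil : γ)
    -- Assumption 1: observed ignorability
    (h1 : ∃ c : χ → α → ℝ≥0∞, ∀ (y : β) (x : χ) (u : α),
      0 < P (Y ⁻¹' {y} ∩ X ⁻¹' {x} ∩ U ⁻¹' {u}) →
        P (G ⁻¹' {gtil} ∩ (Y ⁻¹' {y} ∩ X ⁻¹' {x} ∩ U ⁻¹' {u})) /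
            P (Y ⁻¹' {y} ∩ X ⁻¹' {x} ∩ U ⁻¹' {u}) = c x u)
    -- Assumption 2 or Assumption 3
    (h23 :
      (∀ (x : χ) (u u' : α), 0 < P (X ⁻¹' {x} ∩ U ⁻¹' {u}) →
          0 < P (X ⁻¹' {x} ∩ U ⁻¹' {u'}) →
          P (G ⁻¹' {gtil} ∩ (X ⁻¹' {x} ∩ U ⁻¹' {u})) / P (X ⁻¹' {x} ∩ U ⁻¹' {u}) =
            P (G ⁻¹' {gtil} ∩ (X ⁻¹' {x} ∩ U ⁻¹' {u'})) / P (X ⁻¹' {x} ∩ U ⁻¹' {u'})) ∨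
      (∀ (x : χ) (y : β) (u u' : α), 0 < P (X ⁻¹' {x} ∩ U ⁻¹' {u}) →
          0 < P (X ⁻¹' {x} ∩ U ⁻¹' {u'}) →
          P (Y ⁻¹' {y} ∩ (X ⁻¹' {x} ∩ U ⁻¹' {u})) / P (X ⁻¹' {x} ∩ U ⁻¹' {u}) =
            P (Y ⁻¹' {y} ∩ (X ⁻¹' {x} ∩ U ⁻¹' {u'})) / P (X ⁻¹' {x} ∩ U ⁻¹' {u'}))) :
    ∀ (y : β) (x : χ), 0 < P (X ⁻¹' {x} ∩ G ⁻¹' {gtil}) →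
      P (Y ⁻¹' {y} ∩ (X ⁻¹' {x} ∩ G ⁻¹' {gtil})) / P (X ⁻¹' {x} ∩ G ⁻¹' {gtil}) =
        P (Y ⁻¹' {y} ∩ X ⁻¹' {x}) / P (X ⁻¹' {x}) := by
  obtain ⟨c, hc⟩ := h1
  intro y x hxg
  have mY : ∀ y' : β, MeasurableSet (Y ⁻¹' {y'}) := fun y' => hY (measurableSet_singleton y')
  have mG : MeasurableSet (G ⁻¹' {gtil}) := hG (measurableSet_singleton gtil)
  have mU : ∀ u : α, MeasurableSet (U ⁻¹' {u}) := fun u => hU (measurableSet_singleton u)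
  have mX : MeasurableSet (X ⁻¹' {x}) := hX (measurableSet_singleton x)
  -- Fact 1: P(G ∩ Y ∩ X ∩ U=u) = c x u * P(Y ∩ X ∩ U=u)
  have hGA : ∀ (y' : β) (u : α),
      P (G ⁻¹' {gtil} ∩ (Y ⁻¹' {y'} ∩ X ⁻¹' {x} ∩ U ⁻¹' {u})) =
        c x u * P (Y ⁻¹' {y'} ∩ X ⁻¹' {x} ∩ U ⁻¹' {u}) := by
    intro y' u
    rcases eq_or_ne (P (Y ⁻¹' {y'} ∩ X ⁻¹' {x} ∩ U ⁻¹' {u})) 0 with h0 | h0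
    · rw [h0, mul_zero]
      exact le_antisymm (h0 ▸ measure_mono Set.inter_subset_right) zero_le
    · have h := hc y' x u (pos_iff_ne_zero.mpr h0)
      rw [← h, ENNReal.div_mul_cancel h0 (measure_ne_top P _)]
  -- Fact 2: P(G ∩ X ∩ U=u) = c x u * P(X ∩ U=u)
  have hGB : ∀ u : α, P (G ⁻¹' {gtil} ∩ (X ⁻¹' {x} ∩ U ⁻¹' {u})) =
      c x u * P (X ⁻¹' {x} ∩ U ⁻¹' {u}) := by
    intro u
    have e1 : P (G ⁻¹' {gtil} ∩ (X ⁻¹' {x} ∩ U ⁻¹' {u})) =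
        ∑' y' : β, P (G ⁻¹' {gtil} ∩ (Y ⁻¹' {y'} ∩ X ⁻¹' {x} ∩ U ⁻¹' {u})) := by
      rw [measure_eq_tsum_inter_preimage P Y hY _ (mG.inter ((mX.inter (mU u))))]
      refine tsum_congr fun y' => ?_
      congr 1
      ext ω
      simp only [Set.mem_inter_iff, Set.mem_preimage, Set.mem_singleton_iff]
      tauto
    have e2 : P (X ⁻¹' {x} ∩ U ⁻¹' {u}) =
        ∑' y' : β, P (Y ⁻¹' {y'} ∩ X ⁻¹' {x} ∩ U ⁻¹' {u}) := by
      rw [measure_eq_tsum_inter_preimage P Y hY _ (mX.inter (mU u))]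
      refine tsum_congr fun y' => ?_
      congr 1
      ext ω
      simp only [Set.mem_inter_iff, Set.mem_preimage, Set.mem_singleton_iff]
      tauto
    rw [e1, e2]
    simp_rw [hGA]
    rw [ENNReal.tsum_mul_left]
  -- decompositions over u
  have hPYXG : P (Y ⁻¹' {y} ∩ (X ⁻¹' {x} ∩ G ⁻¹' {gtil})) =
      ∑' u : α, c x u * P (Y ⁻¹' {y} ∩ X ⁻¹' {x} ∩ U ⁻¹' {u}) := by
    rw [measure_eq_tsum_inter_preimage P U hU _ ((mY y).inter (mX.inter mG))]
    refine tsum_congr fun u => ?_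
    rw [← hGA y u]
    congr 1
    ext ω
    simp only [Set.mem_inter_iff, Set.mem_preimage, Set.mem_singleton_iff]
    tauto
  have hPXG : P (X ⁻¹' {x} ∩ G ⁻¹' {gtil}) =
      ∑' u : α, c x u * P (X ⁻¹' {x} ∩ U ⁻¹' {u}) := by
    rw [measure_eq_tsum_inter_preimage P U hU _ (mX.inter mG)]
    refine tsum_congr fun u => ?_
    rw [← hGB u]
    congr 1
    ext ω
    simp only [Set.mem_inter_iff, Set.mem_preimage, Set.mem_singleton_iff]
    tauto
  have hPYX : P (Y ⁻¹' {y} ∩ X ⁻¹' {x}) =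
      ∑' u : α, P (Y ⁻¹' {y} ∩ X ⁻¹' {x} ∩ U ⁻¹' {u}) :=
    measure_eq_tsum_inter_preimage P U hU _ ((mY y).inter mX)
  have hPX : P (X ⁻¹' {x}) = ∑' u : α, P (X ⁻¹' {x} ∩ U ⁻¹' {u}) :=
    measure_eq_tsum_inter_preimage P U hU _ mX
  -- A ≤ B pointwise
  have hAB : ∀ u : α, P (Y ⁻¹' {y} ∩ X ⁻¹' {x} ∩ U ⁻¹' {u}) ≤
      P (X ⁻¹' {x} ∩ U ⁻¹' {u}) := fun u =>
    measure_mono (Set.inter_subset_inter_left _ Set.inter_subset_right)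
  rcases h23 with h2 | h3
  · -- Assumption 2 case
    obtain ⟨u0, hu0⟩ : ∃ u0 : α, c x u0 * P (X ⁻¹' {x} ∩ U ⁻¹' {u0}) ≠ 0 := by
      by_contra h
      push_neg at h
      rw [hPXG, ENNReal.tsum_eq_zero.mpr h] at hxg
      exact lt_irrefl _ hxg
    have hB0 : P (X ⁻¹' {x} ∩ U ⁻¹' {u0}) ≠ 0 := fun h => hu0 (by rw [h, mul_zero])
    have hc0 : c x u0 ≠ 0 := fun h => hu0 (by rw [h, zero_mul])
    have hBt : P (X ⁻¹' {x} ∩ U ⁻¹' {u0}) ≠ ∞ := measure_ne_top P _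
    have hct : c x u0 ≠ ∞ := by
      intro ht
      have hle : c x u0 * P (X ⁻¹' {x} ∩ U ⁻¹' {u0}) ≤ P (X ⁻¹' {x} ∩ U ⁻¹' {u0}) :=
        (hGB u0) ▸ measure_mono Set.inter_subset_right
      rw [ht, ENNReal.top_mul hB0] at hle
      exact (lt_irrefl _ (lt_of_le_of_lt hle (lt_top_iff_ne_top.mpr hBt))).elim
    have hck : ∀ u : α, P (X ⁻¹' {x} ∩ U ⁻¹' {u}) ≠ 0 → c x u = c x u0 := by
      intro u hBu
      have h := h2 x u u0 (pos_iff_ne_zero.mpr hBu) (pos_iff_ne_zero.mpr hB0)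
      rw [hGB u, hGB u0, mul_div_assoc, ENNReal.div_self hBu (measure_ne_top P _), mul_one,
        mul_div_assoc, ENNReal.div_self hB0 hBt, mul_one] at h
      exact h
    have eYXG : P (Y ⁻¹' {y} ∩ (X ⁻¹' {x} ∩ G ⁻¹' {gtil})) =
        c x u0 * P (Y ⁻¹' {y} ∩ X ⁻¹' {x}) := by
      rw [hPYXG, hPYX, ← ENNReal.tsum_mul_left]
      refine tsum_congr fun u => ?_
      rcases eq_or_ne (P (X ⁻¹' {x} ∩ U ⁻¹' {u})) 0 with h | h
      · have hA0 : P (Y ⁻¹' {y} ∩ X ⁻¹' {x} ∩ U ⁻¹' {u}) = 0 :=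
          le_antisymm (h ▸ hAB u) zero_le
        rw [hA0, mul_zero, mul_zero]
      · rw [hck u h]
    have eXG : P (X ⁻¹' {x} ∩ G ⁻¹' {gtil}) = c x u0 * P (X ⁻¹' {x}) := by
      rw [hPXG, hPX, ← ENNReal.tsum_mul_left]
      refine tsum_congr fun u => ?_
      rcases eq_or_ne (P (X ⁻¹' {x} ∩ U ⁻¹' {u})) 0 with h | h
      · rw [h, mul_zero, mul_zero]
      · rw [hck u h]
    rw [eYXG, eXG, ENNReal.mul_div_mul_left _ _ hc0 hct]
  · -- Assumption 3 case
    obtain ⟨u0, hB0⟩ : ∃ u0 : α, P (X ⁻¹' {x} ∩ U ⁻¹' {u0}) ≠ 0 := by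
      by_contra h
      push_neg at h
      have hXpos : 0 < P (X ⁻¹' {x}) := lt_of_lt_of_le hxg (measure_mono Set.inter_subset_left)
      rw [hPX, ENNReal.tsum_eq_zero.mpr h] at hXpos
      exact lt_irrefl _ hXpos
    have hBt : P (X ⁻¹' {x} ∩ U ⁻¹' {u0}) ≠ ∞ := measure_ne_top P _
    set r : ℝ≥0∞ := P (Y ⁻¹' {y} ∩ X ⁻¹' {x} ∩ U ⁻¹' {u0}) / P (X ⁻¹' {x} ∩ U ⁻¹' {u0})
      with hr
    have hAr : ∀ u : α, P (Y ⁻¹' {y} ∩ X ⁻¹' {x} ∩ U ⁻¹' {u}) =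
        r * P (X ⁻¹' {x} ∩ U ⁻¹' {u}) := by
      intro u
      rcases eq_or_ne (P (X ⁻¹' {x} ∩ U ⁻¹' {u})) 0 with h | h
      · have hA0 : P (Y ⁻¹' {y} ∩ X ⁻¹' {x} ∩ U ⁻¹' {u}) = 0 :=
          le_antisymm (h ▸ hAB u) zero_le
        rw [hA0, h, mul_zero]
      · have heq := h3 x y u u0 (pos_iff_ne_zero.mpr h) (pos_iff_ne_zero.mpr hB0)
        rw [← Set.inter_assoc, ← Set.inter_assoc] at heq
        rw [← hr] at heq
        calc P (Y ⁻¹' {y} ∩ X ⁻¹' {x} ∩ U ⁻¹' {u})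
            = P (Y ⁻¹' {y} ∩ X ⁻¹' {x} ∩ U ⁻¹' {u}) / P (X ⁻¹' {x} ∩ U ⁻¹' {u}) *
              P (X ⁻¹' {x} ∩ U ⁻¹' {u}) :=
              (ENNReal.div_mul_cancel h (measure_ne_top P _)).symm
          _ = r * P (X ⁻¹' {x} ∩ U ⁻¹' {u}) := by rw [heq]
    have eYXG : P (Y ⁻¹' {y} ∩ (X ⁻¹' {x} ∩ G ⁻¹' {gtil})) =
        r * P (X ⁻¹' {x} ∩ G ⁻¹' {gtil}) := by
      rw [hPYXG, hPXG, ← ENNReal.tsum_mul_left]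
      refine tsum_congr fun u => ?_
      rw [hAr u, mul_left_comm]
    have eYX : P (Y ⁻¹' {y} ∩ X ⁻¹' {x}) = r * P (X ⁻¹' {x}) := by
      rw [hPYX, hPX, ← ENNReal.tsum_mul_left]
      exact tsum_congr fun u => hAr u
    have hXG0 : P (X ⁻¹' {x} ∩ G ⁻¹' {gtil}) ≠ 0 := hxg.ne'
    have hX0 : P (X ⁻¹' {x}) ≠ 0 :=
      (lt_of_lt_of_le hxg (measure_mono Set.inter_subset_left)).ne'
    rw [eYXG, eYX, mul_div_assoc, ENNReal.div_self hXG0 (measure_ne_top P _), mul_one,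
      mul_div_assoc, ENNReal.div_self hX0 (measure_ne_top P _), mul_one]
end

section
/- Let Y be an integrable real random variable, G a {0,1}-valued random variable, and U a {0,1}-valued random variable on a probability space, with P(U=u, G=g) > 0 for all u,g ∈ {0,1}. Assume Y and G are conditionally independent given U. Then E[Y | G=0] − E[Y | G=1] = (E[Y | U=1] − E[Y | U=0]) · (P(U=1 | G=0) − P(U=1 | G=1)). -/
open MeasureTheory

/-- Conditional probability `P(A | B) = P(A ∩ B) / P(B)` as a real number. -/
noncomputable def condPr {Ω : Type*} [MeasurableSpace Ω] (P : Measure Ω)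
    (A B : Set Ω) : ℝ :=
  (P (A ∩ B)).toReal / (P B).toReal

/-- Conditional expectation `E[Y | B] = E[Y·1_B] / P(B)` as a real number. -/
noncomputable def condMean {Ω : Type*} [MeasurableSpace Ω] (P : Measure Ω)
    (Y : Ω → ℝ) (B : Set Ω) : ℝ :=
  (∫ ω in B, Y ω ∂P) / (P B).toReal

/-- **Appendix B of the paper.**  For an integrable outcome `Y`, a `{0,1}`-valued
missingness indicator `G` and a `{0,1}`-valued confounder `U` with
`P(U=u, G=g) > 0` for all `u, g`, if `Y` and `G` are conditionally independent given
`U`, then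
`E[Y|G=0] − E[Y|G=1] = (E[Y|U=1] − E[Y|U=0]) · (P(U=1|G=0) − P(U=1|G=1))`. -/
theorem mean_bias_decomposition
    {Ω : Type*} [MeasurableSpace Ω] (P : Measure Ω) [IsProbabilityMeasure P]
    (Y : Ω → ℝ) (G U : Ω → Fin 2)
    (hY : Measurable Y) (hYint : Integrable Y P)
    (hG : Measurable G) (hU : Measurable U)
    (hpos : ∀ u g : Fin 2, 0 < P (U ⁻¹' {u} ∩ G ⁻¹' {g}))
    -- conditional independence of Y and G given U
    (hCI : ∀ u : Fin 2, 0 < P (U ⁻¹' {u}) →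
      ∀ (A : Set ℝ) (B : Set (Fin 2)), MeasurableSet A → MeasurableSet B →
        condPr P (Y ⁻¹' A ∩ G ⁻¹' B) (U ⁻¹' {u}) =
          condPr P (Y ⁻¹' A) (U ⁻¹' {u}) * condPr P (G ⁻¹' B) (U ⁻¹' {u})) :
    condMean P Y (G ⁻¹' {0}) - condMean P Y (G ⁻¹' {1}) =
      (condMean P Y (U ⁻¹' {1}) - condMean P Y (U ⁻¹' {0})) *
        (condPr P (U ⁻¹' {1}) (G ⁻¹' {0}) - condPr P (U ⁻¹' {1}) (G ⁻¹' {1})) := by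
  have hmU : ∀ u : Fin 2, MeasurableSet (U ⁻¹' {u}) :=
    fun u => hU (measurableSet_singleton u)
  have hmG : ∀ g : Fin 2, MeasurableSet (G ⁻¹' {g}) :=
    fun g => hG (measurableSet_singleton g)
  have hUpos : ∀ u : Fin 2, 0 < P (U ⁻¹' {u}) := fun u =>
    lt_of_lt_of_le (hpos u 0) (measure_mono Set.inter_subset_left)
  have hGpos : ∀ g : Fin 2, 0 < P (G ⁻¹' {g}) := fun g =>
    lt_of_lt_of_le (hpos 0 g) (measure_mono Set.inter_subset_right)
  have hUr : ∀ u : Fin 2, (0:ℝ) < (P (U ⁻¹' {u})).toReal := fun u =>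
    ENNReal.toReal_pos (hUpos u).ne' (measure_ne_top _ _)
  have hGr : ∀ g : Fin 2, (0:ℝ) < (P (G ⁻¹' {g})).toReal := fun g =>
    ENNReal.toReal_pos (hGpos g).ne' (measure_ne_top _ _)
  -- key factorization at the level of measures
  have key : ∀ u g : Fin 2,
      (P (U ⁻¹' {u})).toReal * ∫ ω in U ⁻¹' {u} ∩ G ⁻¹' {g}, Y ω ∂P =
      (P (U ⁻¹' {u} ∩ G ⁻¹' {g})).toReal * ∫ ω in U ⁻¹' {u}, Y ω ∂P := by
    intro u g
    have hmeas : (P (U ⁻¹' {u})) • ((P.restrict (U ⁻¹' {u} ∩ G ⁻¹' {g})).map Y) =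
        (P (U ⁻¹' {u} ∩ G ⁻¹' {g})) • ((P.restrict (U ⁻¹' {u})).map Y) := by
      ext A hA
      have hCI' := hCI u (hUpos u) A {g} hA (measurableSet_singleton g)
      simp only [condPr] at hCI'
      have e1 : Y ⁻¹' A ∩ (U ⁻¹' {u} ∩ G ⁻¹' {g}) =
          (Y ⁻¹' A ∩ G ⁻¹' {g}) ∩ U ⁻¹' {u} := by
        ext ω; simp [Set.mem_inter_iff]; tauto
      have e2 : U ⁻¹' {u} ∩ G ⁻¹' {g} = G ⁻¹' {g} ∩ U ⁻¹' {u} := Set.inter_comm _ _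
      simp only [Measure.smul_apply, Measure.map_apply hY hA,
        Measure.restrict_apply (hY hA), smul_eq_mul]
      rw [e1, e2]
      have hne1 : P (U ⁻¹' {u}) * P ((Y ⁻¹' A ∩ G ⁻¹' {g}) ∩ U ⁻¹' {u}) ≠ ⊤ :=
        ENNReal.mul_ne_top (measure_ne_top _ _) (measure_ne_top _ _)
      have hne2 : P (G ⁻¹' {g} ∩ U ⁻¹' {u}) * P (Y ⁻¹' A ∩ U ⁻¹' {u}) ≠ ⊤ :=
        ENNReal.mul_ne_top (measure_ne_top _ _) (measure_ne_top _ _)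
      rw [← ENNReal.toReal_eq_toReal_iff' hne1 hne2, ENNReal.toReal_mul, ENNReal.toReal_mul]
      have hp := (hUr u).ne'
      field_simp at hCI'
      nlinarith [hCI', hUr u]
    have e : ∀ μ : Measure Ω, ∫ x, x ∂(μ.map Y) = ∫ ω, Y ω ∂μ := fun μ =>
      integral_map hY.aemeasurable aestronglyMeasurable_id
    have h1 : ∫ x, x ∂((P (U ⁻¹' {u})) • ((P.restrict (U ⁻¹' {u} ∩ G ⁻¹' {g})).map Y)) =
        ∫ x, x ∂((P (U ⁻¹' {u} ∩ G ⁻¹' {g})) • ((P.restrict (U ⁻¹' {u})).map Y)) := by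
      rw [hmeas]
    rw [integral_smul_measure, integral_smul_measure, e, e] at h1
    simpa [smul_eq_mul] using h1
  -- each piece equals condMean times joint probability
  have hpart : ∀ u g : Fin 2,
      ∫ ω in U ⁻¹' {u} ∩ G ⁻¹' {g}, Y ω ∂P =
        condMean P Y (U ⁻¹' {u}) * (P (U ⁻¹' {u} ∩ G ⁻¹' {g})).toReal := by
    intro u g
    have hk := key u g
    rw [condMean]
    have hp := (hUr u).ne'
    field_simp
    linarith [hk]
  -- splitting over U
  have htwo : ∀ x : Fin 2, x = 0 ∨ x = 1 := by decide
  have hdis : ∀ g : Fin 2,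
      Disjoint (U ⁻¹' {0} ∩ G ⁻¹' {g}) (U ⁻¹' {1} ∩ G ⁻¹' {g}) := by
    intro g
    rw [Set.disjoint_left]
    rintro ω ⟨h0, -⟩ ⟨h1, -⟩
    simp only [Set.mem_preimage, Set.mem_singleton_iff] at h0 h1
    rw [h0] at h1; exact absurd h1 (by decide)
  have hun : ∀ g : Fin 2,
      (U ⁻¹' {0} ∩ G ⁻¹' {g}) ∪ (U ⁻¹' {1} ∩ G ⁻¹' {g}) = G ⁻¹' {g} := by
    intro g
    ext ω
    simp only [Set.mem_union, Set.mem_inter_iff, Set.mem_preimage, Set.mem_singleton_iff]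
    rcases htwo (U ω) with h | h <;> simp [h]
  have split : ∀ g : Fin 2, ∫ ω in G ⁻¹' {g}, Y ω ∂P =
      (∫ ω in U ⁻¹' {0} ∩ G ⁻¹' {g}, Y ω ∂P) +
      (∫ ω in U ⁻¹' {1} ∩ G ⁻¹' {g}, Y ω ∂P) := by
    intro g
    have h := setIntegral_union (f := Y) (μ := P) (hdis g) ((hmU 1).inter (hmG g))
      hYint.integrableOn hYint.integrableOn
    rw [hun g] at h
    exact h
  -- probabilities sum to the marginal
  have hsum : ∀ g : Fin 2,
      (P (U ⁻¹' {0} ∩ G ⁻¹' {g})).toReal + (P (U ⁻¹' {1} ∩ G ⁻¹' {g})).toReal =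
        (P (G ⁻¹' {g})).toReal := by
    intro g
    rw [← ENNReal.toReal_add (measure_ne_top _ _) (measure_ne_top _ _),
      ← measure_union (hdis g) ((hmU 1).inter (hmG g)), hun g]
  -- final algebra
  rw [condMean, condMean, split 0, split 1, hpart 0 0, hpart 0 1, hpart 1 0, hpart 1 1]
  simp only [condPr]
  set m0 := condMean P Y (U ⁻¹' {0}) with hm0
  set m1 := condMean P Y (U ⁻¹' {1}) with hm1
  set a := (P (U ⁻¹' {1} ∩ G ⁻¹' {0})).toReal with ha
  set b := (P (U ⁻¹' {1} ∩ G ⁻¹' {1})).toReal with hb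
  set P0 := (P (G ⁻¹' {0})).toReal with hP0
  set P1 := (P (G ⁻¹' {1})).toReal with hP1
  have e00 : (P (U ⁻¹' {0} ∩ G ⁻¹' {0})).toReal = P0 - a := by
    have := hsum 0; linarith
  have e01 : (P (U ⁻¹' {0} ∩ G ⁻¹' {1})).toReal = P1 - b := by
    have := hsum 1; linarith
  rw [e00, e01]
  have p0 : P0 ≠ 0 := (hGr 0).ne'
  have p1 : P1 ≠ 0 := (hGr 1).ne'
  field_simp
  ring
end

section
/- Let Y be an integrable real random variable, G a {0,1}-valued random variable, and U a {0,1}-valued random variable on a probability space, with P(U=u, G=g) > 0 for all u,g ∈ {0,1}. Assume Y and G are conditionally independent given U. Define ED_YU = E[Y|U=1] − E[Y|U=0] and RD_UG = P(U=1|G=1) − P(U=1|G=0). Then |E[Y] − E[Y | G=1]| = |ED_YU · RD_UG| · P(G=0). -/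
open MeasureTheory

lemma arith_key (m0 m1 a b c d : ℝ) (ha : 0 < a) (hb : 0 < b) (hc : 0 < c) (hd : 0 < d)
    (hsum : a + b + c + d = 1) :
    m0*(a+b) + m1*(c+d) - (m0*b + m1*d)/(b+d)
      = -((m1 - m0) * (d/(b+d) - c/(a+c)) * (a+c)) := by
  have h1 : b + d ≠ 0 := by positivity
  have h2 : a + c ≠ 0 := by positivity
  have ha' : a = 1 - b - c - d := by linarith
  subst ha'
  field_simp
  ring

lemma key_int {Ω : Type*} [MeasurableSpace Ω] (P : Measure Ω) [IsProbabilityMeasure P]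
    (Y : Ω → ℝ) (G U : Ω → Fin 2)
    (hY : Measurable Y) (hG : Measurable G) (hU : Measurable U)
    (hCI : ∀ u : Fin 2, 0 < P (U ⁻¹' {u}) →
      ∀ (A : Set ℝ) (B : Set (Fin 2)), MeasurableSet A → MeasurableSet B →
        condPr P (Y ⁻¹' A ∩ G ⁻¹' B) (U ⁻¹' {u}) =
          condPr P (Y ⁻¹' A) (U ⁻¹' {u}) * condPr P (G ⁻¹' B) (U ⁻¹' {u}))
    (u g : Fin 2) (hUpos : 0 < P (U ⁻¹' {u})) :
    ∫ ω in (U ⁻¹' {u} ∩ G ⁻¹' {g}), Y ω ∂P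
      = condMean P Y (U ⁻¹' {u}) * (P (U ⁻¹' {u} ∩ G ⁻¹' {g})).toReal := by
  set S := U ⁻¹' {u} with hSdef
  set T := G ⁻¹' {g} with hTdef
  have hS : MeasurableSet S := hU (measurableSet_singleton u)
  have hT : MeasurableSet T := hG (measurableSet_singleton g)
  have hSne : P S ≠ 0 := hUpos.ne'
  have hStop : P S ≠ ⊤ := measure_ne_top P S
  have hSr : (P S).toReal ≠ 0 := by
    simp [ENNReal.toReal_ne_zero, hSne, hStop]
  set c : ENNReal := P (S ∩ T) / P S with hcdef
  have hmap : Measure.map Y (P.restrict (S ∩ T)) = c • Measure.map Y (P.restrict S) := by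
    ext A hA
    rw [Measure.map_apply hY hA, Measure.smul_apply, Measure.map_apply hY hA,
      Measure.restrict_apply (hY hA), Measure.restrict_apply (hY hA)]
    have h := hCI u hUpos A {g} hA (measurableSet_singleton g)
    unfold condPr at h
    have hrw : Y ⁻¹' A ∩ G ⁻¹' {g} ∩ S = Y ⁻¹' A ∩ (S ∩ T) := by
      rw [← hTdef]; ext x; simp only [Set.mem_inter_iff]; tauto
    rw [hrw] at h
    have hfin1 : P (Y ⁻¹' A ∩ (S ∩ T)) ≠ ⊤ := measure_ne_top _ _
    have hfin2 : c * P (Y ⁻¹' A ∩ S) ≠ ⊤ := by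
      apply ENNReal.mul_ne_top
      · exact (ENNReal.div_lt_top (measure_ne_top _ _) hSne).ne
      · exact measure_ne_top _ _
    rw [smul_eq_mul]
    rw [← ENNReal.toReal_eq_toReal_iff' hfin1 hfin2]
    rw [ENNReal.toReal_mul, hcdef, ENNReal.toReal_div]
    have hTS : T ∩ S = S ∩ T := Set.inter_comm _ _
    rw [hTS, ← hSdef] at h
    rw [div_mul_eq_mul_div, eq_div_iff hSr]
    field_simp at h
    apply mul_right_cancel₀ hSr
    linear_combination (P S).toReal * h
  calc ∫ ω in S ∩ T, Y ω ∂P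
      = ∫ y, y ∂(Measure.map Y (P.restrict (S ∩ T))) :=
        (integral_map hY.aemeasurable measurable_id.aestronglyMeasurable).symm
    _ = ∫ y, y ∂(c • Measure.map Y (P.restrict S)) := by rw [hmap]
    _ = c.toReal * ∫ y, y ∂(Measure.map Y (P.restrict S)) := by
        rw [integral_smul_measure]; rfl
    _ = c.toReal * ∫ ω in S, Y ω ∂P := by
        have hm2 : (∫ y, y ∂Measure.map Y (P.restrict S)) = ∫ ω in S, Y ω ∂P :=
          integral_map hY.aemeasurable measurable_id.aestronglyMeasurable
        rw [hm2]
    _ = condMean P Y S * (P (S ∩ T)).toReal := by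
        rw [hcdef, ENNReal.toReal_div]
        unfold condMean
        field_simp

/-- **Equation (8) of the paper.**  With `ED_YU = E[Y|U=1] − E[Y|U=0]` and
`RD_UG = P(U=1|G=1) − P(U=1|G=0)`, the bias of the observed-data mean satisfies
`|E[Y] − E[Y|G=1]| = |ED_YU · RD_UG| · P(G=0)`. -/
theorem mean_bias_difference_scale
    {Ω : Type*} [MeasurableSpace Ω] (P : Measure Ω) [IsProbabilityMeasure P]
    (Y : Ω → ℝ) (G U : Ω → Fin 2)
    (hY : Measurable Y) (hYint : Integrable Y P)
    (hG : Measurable G) (hU : Measurable U)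
    (hpos : ∀ u g : Fin 2, 0 < P (U ⁻¹' {u} ∩ G ⁻¹' {g}))
    -- conditional independence of Y and G given U
    (hCI : ∀ u : Fin 2, 0 < P (U ⁻¹' {u}) →
      ∀ (A : Set ℝ) (B : Set (Fin 2)), MeasurableSet A → MeasurableSet B →
        condPr P (Y ⁻¹' A ∩ G ⁻¹' B) (U ⁻¹' {u}) =
          condPr P (Y ⁻¹' A) (U ⁻¹' {u}) * condPr P (G ⁻¹' B) (U ⁻¹' {u}))
    (ED_YU RD_UG : ℝ)
    (hED : ED_YU = condMean P Y (U ⁻¹' {1}) - condMean P Y (U ⁻¹' {0}))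
    (hRD : RD_UG = condPr P (U ⁻¹' {1}) (G ⁻¹' {1}) - condPr P (U ⁻¹' {1}) (G ⁻¹' {0})) :
    |(∫ ω, Y ω ∂P) - condMean P Y (G ⁻¹' {1})| =
      |ED_YU * RD_UG| * (P (G ⁻¹' {0})).toReal := by
  -- measurable sets
  have hU0 : MeasurableSet (U ⁻¹' {0}) := hU (measurableSet_singleton 0)
  have hU1 : MeasurableSet (U ⁻¹' {1}) := hU (measurableSet_singleton 1)
  have hG0 : MeasurableSet (G ⁻¹' {0}) := hG (measurableSet_singleton 0)
  have hG1 : MeasurableSet (G ⁻¹' {1}) := hG (measurableSet_singleton 1)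
  -- complements
  have hc0 : ({(0 : Fin 2)} : Set (Fin 2))ᶜ = {1} := by
    ext x; fin_cases x <;> simp
  have hc1 : ({(1 : Fin 2)} : Set (Fin 2))ᶜ = {0} := by
    ext x; fin_cases x <;> simp
  have hU0c : (U ⁻¹' {0})ᶜ = U ⁻¹' {1} := by
    rw [← Set.preimage_compl, hc0]
  have hG1c : (G ⁻¹' {1})ᶜ = G ⁻¹' {0} := by
    rw [← Set.preimage_compl, hc1]
  -- positivity
  have hUpos : ∀ u : Fin 2, 0 < P (U ⁻¹' {u}) := fun u =>
    lt_of_lt_of_le (hpos u 0) (measure_mono Set.inter_subset_left)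
  -- real-valued cell probabilities
  set a : ℝ := (P (U ⁻¹' {0} ∩ G ⁻¹' {0})).toReal with hadef
  set b : ℝ := (P (U ⁻¹' {0} ∩ G ⁻¹' {1})).toReal with hbdef
  set c : ℝ := (P (U ⁻¹' {1} ∩ G ⁻¹' {0})).toReal with hcdef
  set d : ℝ := (P (U ⁻¹' {1} ∩ G ⁻¹' {1})).toReal with hddef
  have hap : 0 < a := ENNReal.toReal_pos (hpos 0 0).ne' (measure_ne_top _ _)
  have hbp : 0 < b := ENNReal.toReal_pos (hpos 0 1).ne' (measure_ne_top _ _)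
  have hcp : 0 < c := ENNReal.toReal_pos (hpos 1 0).ne' (measure_ne_top _ _)
  have hdp : 0 < d := ENNReal.toReal_pos (hpos 1 1).ne' (measure_ne_top _ _)
  -- marginal splits (in ℝ)
  have hsplitU : ∀ u : Fin 2, (P (U ⁻¹' {u})).toReal
      = (P (U ⁻¹' {u} ∩ G ⁻¹' {0})).toReal + (P (U ⁻¹' {u} ∩ G ⁻¹' {1})).toReal := by
    intro u
    have h := measure_inter_add_diff (μ := P) (U ⁻¹' {u}) hG1
    have hdiff : U ⁻¹' {u} \ G ⁻¹' {1} = U ⁻¹' {u} ∩ G ⁻¹' {0} := by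
      rw [Set.diff_eq, hG1c]
    rw [hdiff] at h
    rw [← h, ENNReal.toReal_add (measure_ne_top _ _) (measure_ne_top _ _)]
    ring
  have hsplitG : ∀ g : Fin 2, (P (G ⁻¹' {g})).toReal
      = (P (U ⁻¹' {0} ∩ G ⁻¹' {g})).toReal + (P (U ⁻¹' {1} ∩ G ⁻¹' {g})).toReal := by
    intro g
    have h := measure_inter_add_diff (μ := P) (G ⁻¹' {g}) hU0
    have hdiff : G ⁻¹' {g} \ U ⁻¹' {0} = U ⁻¹' {1} ∩ G ⁻¹' {g} := by
      rw [Set.diff_eq, hU0c, Set.inter_comm]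
    have hcomm : G ⁻¹' {g} ∩ U ⁻¹' {0} = U ⁻¹' {0} ∩ G ⁻¹' {g} := Set.inter_comm _ _
    rw [hdiff, hcomm] at h
    rw [← h, ENNReal.toReal_add (measure_ne_top _ _) (measure_ne_top _ _)]
  have hU0r : (P (U ⁻¹' {0})).toReal = a + b := hsplitU 0
  have hU1r : (P (U ⁻¹' {1})).toReal = c + d := hsplitU 1
  have hG0r : (P (G ⁻¹' {0})).toReal = a + c := hsplitG 0
  have hG1r : (P (G ⁻¹' {1})).toReal = b + d := hsplitG 1
  -- total mass one
  have hsum : a + b + c + d = 1 := by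
    have h := measure_add_measure_compl (μ := P) hU0
    rw [hU0c, measure_univ] at h
    have h' : (P (U ⁻¹' {0})).toReal + (P (U ⁻¹' {1})).toReal = 1 := by
      rw [← ENNReal.toReal_add (measure_ne_top _ _) (measure_ne_top _ _), h]
      simp
    rw [hU0r, hU1r] at h'
    linarith
  -- abbreviations for conditional means
  set m0 : ℝ := condMean P Y (U ⁻¹' {0}) with hm0def
  set m1 : ℝ := condMean P Y (U ⁻¹' {1}) with hm1def
  -- integral over U-slices
  have hIntU : ∀ u : Fin 2, (∫ ω in U ⁻¹' {u}, Y ω ∂P)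
      = condMean P Y (U ⁻¹' {u}) * (P (U ⁻¹' {u})).toReal := by
    intro u
    have hne : (P (U ⁻¹' {u})).toReal ≠ 0 := by
      exact (ENNReal.toReal_pos (hUpos u).ne' (measure_ne_top _ _)).ne'
    unfold condMean
    rw [div_mul_cancel₀ _ hne]
  -- total integral
  have hEY : (∫ ω, Y ω ∂P) = m0 * (a + b) + m1 * (c + d) := by
    have h := integral_add_compl hU0 hYint
    rw [hU0c] at h
    rw [← h, hIntU 0, hIntU 1, hU0r, hU1r]
  -- integral over G=1 split by U
  have hIG1 : (∫ ω in G ⁻¹' {1}, Y ω ∂P) = m0 * b + m1 * d := by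
    have h := integral_add_compl (μ := P.restrict (G ⁻¹' {1})) hU0 hYint.restrict
    rw [hU0c, Measure.restrict_restrict hU0, Measure.restrict_restrict hU1] at h
    rw [← h, key_int P Y G U hY hG hU hCI 0 1 (hUpos 0),
      key_int P Y G U hY hG hU hCI 1 1 (hUpos 1)]
  -- conditional mean given G=1
  have hCMG1 : condMean P Y (G ⁻¹' {1}) = (m0 * b + m1 * d) / (b + d) := by
    unfold condMean
    rw [hIG1, hG1r]
  -- conditional probabilities
  have hPr1 : condPr P (U ⁻¹' {1}) (G ⁻¹' {1}) = d / (b + d) := by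
    unfold condPr; rw [hG1r, ← hddef]
  have hPr0 : condPr P (U ⁻¹' {1}) (G ⁻¹' {0}) = c / (a + c) := by
    unfold condPr; rw [hG0r, ← hcdef]
  -- final computation
  rw [hEY, hCMG1, hG0r, hED, hRD, hPr1, hPr0]
  rw [arith_key m0 m1 a b c d hap hbp hcp hdp hsum]
  rw [abs_neg, abs_mul]
  rw [abs_of_nonneg (by linarith : (0:ℝ) ≤ a + c)]
end

section
/- Let Y be an integrable real random variable, G a {0,1}-valued random variable, and U a {0,1}-valued random variable on a probability space, with P(U=u, G=g) > 0 for all u,g ∈ {0,1} and E[Y|U=0] ≠ 0. Assume Y and G are conditionally independent given U. Define ER_YU = E[Y|U=1]/E[Y|U=0], RR_UG = P(U=1|G=1)/P(U=1|G=0), and p₀ = P(U=1|G=0). If E[Y|G=1] ≠ 0, then E[Y|G=0]/E[Y|G=1] = (ER_YU − 1 + 1/p₀) / ((ER_YU − 1)·RR_UG + 1/p₀). -/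
open MeasureTheory ENNReal

lemma setIntegral_eq_condMean_mul
    {Ω : Type*} [MeasurableSpace Ω] (P : Measure Ω) [IsProbabilityMeasure P]
    (Y : Ω → ℝ) (hY : Measurable Y)
    {S T : Set Ω} (hS : MeasurableSet S) (hT : MeasurableSet T)
    (hSpos : 0 < P S)
    (hfac : ∀ (A : Set ℝ), MeasurableSet A →
      condPr P (Y ⁻¹' A ∩ T) S = condPr P (Y ⁻¹' A) S * condPr P T S) :
    ∫ ω in S ∩ T, Y ω ∂P = condMean P Y S * (P (S ∩ T)).toReal := by
  set c : ℝ≥0∞ := P (S ∩ T) / P S with hc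
  have hPSne : P S ≠ 0 := hSpos.ne'
  have hPStop : P S ≠ ⊤ := measure_ne_top _ _
  have hctop : c ≠ ⊤ := by
    rw [hc]; exact (ENNReal.div_lt_top (measure_ne_top _ _) hPSne).ne
  have hcto : c.toReal = (P (S ∩ T)).toReal / (P S).toReal := ENNReal.toReal_div _ _
  have hmap : Measure.map Y (P.restrict (S ∩ T)) = c • Measure.map Y (P.restrict S) := by
    ext A hA
    rw [Measure.map_apply hY hA, Measure.smul_apply, Measure.map_apply hY hA,
      Measure.restrict_apply (hY hA), Measure.restrict_apply (hY hA), smul_eq_mul]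
    have h1 := hfac A hA
    simp only [condPr] at h1
    have hst : Y ⁻¹' A ∩ (S ∩ T) = (Y ⁻¹' A ∩ T) ∩ S := by
      ext ω; simp [and_comm, and_assoc, and_left_comm]
    have hPSr : (P S).toReal ≠ 0 := by
      simp [ENNReal.toReal_ne_zero, hPSne, hPStop]
    rw [hst]
    apply (ENNReal.toReal_eq_toReal_iff' (measure_ne_top _ _)
      (ENNReal.mul_ne_top hctop (measure_ne_top _ _))).mp
    rw [ENNReal.toReal_mul, hcto, Set.inter_comm S T]
    rw [div_eq_iff hPSr] at h1
    rw [h1]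
    field_simp
  have hid : ∫ x, x ∂(Measure.map Y (P.restrict (S ∩ T))) = ∫ ω in S ∩ T, Y ω ∂P :=
    integral_map hY.aemeasurable aestronglyMeasurable_id
  have hid2 : ∫ x, x ∂(Measure.map Y (P.restrict S)) = ∫ ω in S, Y ω ∂P :=
    integral_map hY.aemeasurable aestronglyMeasurable_id

  rw [← hid, hmap, integral_smul_measure, hid2, hcto, condMean, smul_eq_mul]
  ring
/-- **Equation (12) of the paper.**  With `ER_YU = E[Y|U=1]/E[Y|U=0]`,
`RR_UG = P(U=1|G=1)/P(U=1|G=0)` and `p₀ = P(U=1|G=0)`, if `E[Y|G=1] ≠ 0` then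
`E[Y|G=0]/E[Y|G=1] = (ER_YU − 1 + 1/p₀) / ((ER_YU − 1)·RR_UG + 1/p₀)`. -/
theorem mean_ratio_decomposition
    {Ω : Type*} [MeasurableSpace Ω] (P : Measure Ω) [IsProbabilityMeasure P]
    (Y : Ω → ℝ) (G U : Ω → Fin 2)
    (hY : Measurable Y) (hYint : Integrable Y P)
    (hG : Measurable G) (hU : Measurable U)
    (hpos : ∀ u g : Fin 2, 0 < P (U ⁻¹' {u} ∩ G ⁻¹' {g}))
    (hU0 : condMean P Y (U ⁻¹' {0}) ≠ 0)
    -- conditional independence of Y and G given U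
    (hCI : ∀ u : Fin 2, 0 < P (U ⁻¹' {u}) →
      ∀ (A : Set ℝ) (B : Set (Fin 2)), MeasurableSet A → MeasurableSet B →
        condPr P (Y ⁻¹' A ∩ G ⁻¹' B) (U ⁻¹' {u}) =
          condPr P (Y ⁻¹' A) (U ⁻¹' {u}) * condPr P (G ⁻¹' B) (U ⁻¹' {u}))
    (ER_YU RR_UG p₀ : ℝ)
    (hER : ER_YU = condMean P Y (U ⁻¹' {1}) / condMean P Y (U ⁻¹' {0}))
    (hRR : RR_UG = condPr P (U ⁻¹' {1}) (G ⁻¹' {1}) / condPr P (U ⁻¹' {1}) (G ⁻¹' {0}))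
    (hp₀ : p₀ = condPr P (U ⁻¹' {1}) (G ⁻¹' {0}))
    (hG1 : condMean P Y (G ⁻¹' {1}) ≠ 0) :
    condMean P Y (G ⁻¹' {0}) / condMean P Y (G ⁻¹' {1}) =
      (ER_YU - 1 + 1 / p₀) / ((ER_YU - 1) * RR_UG + 1 / p₀) := by
  have hmU : ∀ u : Fin 2, MeasurableSet (U ⁻¹' {u}) := fun u => hU (measurableSet_singleton u)
  have hmG : ∀ g : Fin 2, MeasurableSet (G ⁻¹' {g}) := fun g => hG (measurableSet_singleton g)
  have hPU : ∀ u : Fin 2, 0 < P (U ⁻¹' {u}) := fun u =>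
    lt_of_lt_of_le (hpos u 0) (measure_mono Set.inter_subset_left)
  have hPG : ∀ g : Fin 2, 0 < P (G ⁻¹' {g}) := fun g =>
    lt_of_lt_of_le (hpos 0 g) (measure_mono Set.inter_subset_right)
  -- key factorization of set integrals
  have key : ∀ u g : Fin 2, ∫ ω in U ⁻¹' {u} ∩ G ⁻¹' {g}, Y ω ∂P =
      condMean P Y (U ⁻¹' {u}) * (P (U ⁻¹' {u} ∩ G ⁻¹' {g})).toReal := by
    intro u g
    exact setIntegral_eq_condMean_mul P Y hY (hmU u) (hmG g) (hPU u)
      (fun A hA => hCI u (hPU u) A {g} hA (measurableSet_singleton g))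
  have hfin2 : ∀ v : Fin 2, v = 0 ∨ v = 1 := by decide
  have hdisj : ∀ g : Fin 2,
      Disjoint (U ⁻¹' {0} ∩ G ⁻¹' {g}) (U ⁻¹' {1} ∩ G ⁻¹' {g}) := by
    intro g
    apply Set.disjoint_left.mpr
    rintro ω ⟨h0, -⟩ ⟨h1, -⟩
    simp only [Set.mem_preimage, Set.mem_singleton_iff] at h0 h1
    rw [h0] at h1; exact absurd h1 (by decide)
  have hunion : ∀ g : Fin 2,
      (U ⁻¹' {0} ∩ G ⁻¹' {g}) ∪ (U ⁻¹' {1} ∩ G ⁻¹' {g}) = G ⁻¹' {g} := by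
    intro g
    ext ω
    simp only [Set.mem_union, Set.mem_inter_iff, Set.mem_preimage, Set.mem_singleton_iff]
    rcases hfin2 (U ω) with h | h <;> simp [h] <;> tauto
  have hsplitP : ∀ g : Fin 2,
      P (U ⁻¹' {0} ∩ G ⁻¹' {g}) + P (U ⁻¹' {1} ∩ G ⁻¹' {g}) = P (G ⁻¹' {g}) := by
    intro g
    rw [← measure_union (hdisj g) ((hmU 1).inter (hmG g)), hunion g]
  have hsplitI : ∀ g : Fin 2,
      ∫ ω in G ⁻¹' {g}, Y ω ∂P =
        (∫ ω in U ⁻¹' {0} ∩ G ⁻¹' {g}, Y ω ∂P) +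
        (∫ ω in U ⁻¹' {1} ∩ G ⁻¹' {g}, Y ω ∂P) := by
    intro g
    rw [← setIntegral_union (hdisj g) ((hmU 1).inter (hmG g))
      hYint.integrableOn hYint.integrableOn, hunion g]
  -- abbreviations
  set m0 := condMean P Y (U ⁻¹' {0}) with hm0
  set m1 := condMean P Y (U ⁻¹' {1}) with hm1
  set a : Fin 2 → Fin 2 → ℝ := fun u g => (P (U ⁻¹' {u} ∩ G ⁻¹' {g})).toReal with ha
  set b : Fin 2 → ℝ := fun g => (P (G ⁻¹' {g})).toReal with hb
  have hapos : ∀ u g : Fin 2, 0 < a u g := fun u g =>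
    ENNReal.toReal_pos (hpos u g).ne' (measure_ne_top _ _)
  have hbpos : ∀ g : Fin 2, 0 < b g := fun g =>
    ENNReal.toReal_pos (hPG g).ne' (measure_ne_top _ _)
  have hab : ∀ g : Fin 2, a 0 g + a 1 g = b g := by
    intro g
    rw [ha, hb]
    simp only
    rw [← ENNReal.toReal_add (measure_ne_top _ _) (measure_ne_top _ _), hsplitP g]
  have hEg : ∀ g : Fin 2, condMean P Y (G ⁻¹' {g}) = (m0 * a 0 g + m1 * a 1 g) / b g := by
    intro g
    rw [condMean, hsplitI g, key 0 g, key 1 g]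
  have hq : ∀ g : Fin 2, condPr P (U ⁻¹' {1}) (G ⁻¹' {g}) = a 1 g / b g := fun g => rfl
  rw [hEg 1] at hG1
  have hbne : ∀ g : Fin 2, b g ≠ 0 := fun g => (hbpos g).ne'
  have hane : ∀ u g : Fin 2, a u g ≠ 0 := fun u g => (hapos u g).ne'
  have hD : m0 * a 0 1 + m1 * a 1 1 ≠ 0 := by
    intro h; exact hG1 (by rw [h, zero_div])
  rw [hEg 0, hEg 1, hER, hRR, hp₀, hq 0, hq 1]
  have h0 : b 0 = a 0 0 + a 1 0 := (hab 0).symm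
  have h1 : b 1 = a 0 1 + a 1 1 := (hab 1).symm
  rw [h0, h1]
  have hs0 : a 0 0 + a 1 0 ≠ 0 := (add_pos (hapos 0 0) (hapos 1 0)).ne'
  have hs1 : a 0 1 + a 1 1 ≠ 0 := (add_pos (hapos 0 1) (hapos 1 1)).ne'
  have ha10 : a 1 0 ≠ 0 := hane 1 0
  have ha11 : a 1 1 ≠ 0 := hane 1 1
  have hRden : (m1 / m0 - 1) * (a 1 1 / (a 0 1 + a 1 1) / (a 1 0 / (a 0 0 + a 1 0))) +
        1 / (a 1 0 / (a 0 0 + a 1 0)) =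
      ((a 0 0 + a 1 0) * (m0 * a 0 1 + m1 * a 1 1)) / (m0 * (a 1 0 * (a 0 1 + a 1 1))) := by
    field_simp
    ring
  rw [hRden]
  rw [div_eq_div_iff (div_ne_zero hD hs1) (div_ne_zero (mul_ne_zero hs0 hD)
    (mul_ne_zero hU0 (mul_ne_zero ha10 hs1)))]
  field_simp
  ring
end

section
/- Let Y be a nonnegative integrable real random variable, G a {0,1}-valued random variable, and U a {0,1}-valued random variable on a probability space, with P(U=u, G=g) > 0 for all u,g ∈ {0,1}, E[Y|U=0] > 0 and E[Y|U=1] > 0. Assume Y and G are conditionally independent given U. Define ER_YU = E[Y|U=1]/E[Y|U=0] and RR_UG = P(U=1|G=1)/P(U=1|G=0). Then |E[Y]/E[Y|G=1] − 1| ≤ |(ER_YU − 1)(RR_UG − 1) / (ER_YU · RR_UG)| · P(G=0). -/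
open MeasureTheory

lemma key_factor {Ω : Type*} [MeasurableSpace Ω] (P : Measure Ω) [IsProbabilityMeasure P]
    (Y : Ω → ℝ) (G U : Ω → Fin 2) (hY : Measurable Y)
    (u g : Fin 2) (hUu : 0 < P (U ⁻¹' {u}))
    (hCIu : ∀ (A : Set ℝ) (B : Set (Fin 2)), MeasurableSet A → MeasurableSet B →
      condPr P (Y ⁻¹' A ∩ G ⁻¹' B) (U ⁻¹' {u}) =
        condPr P (Y ⁻¹' A) (U ⁻¹' {u}) * condPr P (G ⁻¹' B) (U ⁻¹' {u})) :
    (P (U ⁻¹' {u})).toReal * ∫ ω in U ⁻¹' {u} ∩ G ⁻¹' {g}, Y ω ∂P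
      = (P (U ⁻¹' {u} ∩ G ⁻¹' {g})).toReal * ∫ ω in U ⁻¹' {u}, Y ω ∂P := by
  have hc : (P (U ⁻¹' {u})).toReal ≠ 0 := by
    have := hUu.ne'
    simp [ENNReal.toReal_ne_zero, this, measure_ne_top]
  have hmeq : (P (U ⁻¹' {u})) • Measure.map Y (P.restrict (U ⁻¹' {u} ∩ G ⁻¹' {g}))
      = (P (U ⁻¹' {u} ∩ G ⁻¹' {g})) • Measure.map Y (P.restrict (U ⁻¹' {u})) := by
    ext A hA
    have hCI' := hCIu A {g} hA (measurableSet_singleton g)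
    unfold condPr at hCI'
    have hset : (Y ⁻¹' A ∩ G ⁻¹' {g}) ∩ U ⁻¹' {u} = Y ⁻¹' A ∩ (U ⁻¹' {u} ∩ G ⁻¹' {g}) := by
      ext x; simp; tauto
    rw [hset] at hCI'
    have hset2 : G ⁻¹' {g} ∩ U ⁻¹' {u} = U ⁻¹' {u} ∩ G ⁻¹' {g} := Set.inter_comm _ _
    rw [hset2] at hCI'
    have hreal : (P (U ⁻¹' {u})).toReal * (P (Y ⁻¹' A ∩ (U ⁻¹' {u} ∩ G ⁻¹' {g}))).toReal
        = (P (U ⁻¹' {u} ∩ G ⁻¹' {g})).toReal * (P (Y ⁻¹' A ∩ U ⁻¹' {u})).toReal := by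
      field_simp at hCI'
      have h2 : ((P (Y ⁻¹' A ∩ (U ⁻¹' {u} ∩ G ⁻¹' {g}))).toReal * (P (U ⁻¹' {u})).toReal)
            * (P (U ⁻¹' {u})).toReal
          = ((P (Y ⁻¹' A ∩ U ⁻¹' {u})).toReal * (P (U ⁻¹' {u} ∩ G ⁻¹' {g})).toReal)
            * (P (U ⁻¹' {u})).toReal := by rw [hCI']
      have h3 := mul_right_cancel₀ hc h2
      linarith
    have hE : P (U ⁻¹' {u}) * P (Y ⁻¹' A ∩ (U ⁻¹' {u} ∩ G ⁻¹' {g}))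
        = P (U ⁻¹' {u} ∩ G ⁻¹' {g}) * P (Y ⁻¹' A ∩ U ⁻¹' {u}) := by
      rw [← ENNReal.toReal_eq_toReal_iff' (by finiteness) (by finiteness)] at *
      simpa [ENNReal.toReal_mul] using hreal
    simp only [Measure.smul_apply, smul_eq_mul,
      Measure.map_apply hY hA, Measure.restrict_apply (hY hA)]
    exact hE
  have hint := congrArg (fun μ : Measure ℝ => ∫ x, x ∂μ) hmeq
  simp only [integral_smul_measure, smul_eq_mul] at hint
  have h1 : ∫ x, x ∂Measure.map Y (P.restrict (U ⁻¹' {u} ∩ G ⁻¹' {g}))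
      = ∫ ω in U ⁻¹' {u} ∩ G ⁻¹' {g}, Y ω ∂P :=
    integral_map hY.aemeasurable aestronglyMeasurable_id
  have h2 : ∫ x, x ∂Measure.map Y (P.restrict (U ⁻¹' {u}))
      = ∫ ω in U ⁻¹' {u}, Y ω ∂P :=
    integral_map hY.aemeasurable aestronglyMeasurable_id
  rw [h1, h2] at hint
  exact hint

/-- **Inequality (14) of the paper.**  For a nonnegative integrable outcome `Y`, with
`ER_YU = E[Y|U=1]/E[Y|U=0]` and `RR_UG = P(U=1|G=1)/P(U=1|G=0)`,
`|E[Y]/E[Y|G=1] − 1| ≤ |(ER_YU − 1)(RR_UG − 1)/(ER_YU·RR_UG)| · P(G=0)`. -/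
theorem ratio_scale_bias_bound
    {Ω : Type*} [MeasurableSpace Ω] (P : Measure Ω) [IsProbabilityMeasure P]
    (Y : Ω → ℝ) (G U : Ω → Fin 2)
    (hY : Measurable Y) (hYint : Integrable Y P) (hYnn : ∀ ω, 0 ≤ Y ω)
    (hG : Measurable G) (hU : Measurable U)
    (hpos : ∀ u g : Fin 2, 0 < P (U ⁻¹' {u} ∩ G ⁻¹' {g}))
    (hU0 : 0 < condMean P Y (U ⁻¹' {0}))
    (hU1 : 0 < condMean P Y (U ⁻¹' {1}))
    -- conditional independence of Y and G given U
    (hCI : ∀ u : Fin 2, 0 < P (U ⁻¹' {u}) →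
      ∀ (A : Set ℝ) (B : Set (Fin 2)), MeasurableSet A → MeasurableSet B →
        condPr P (Y ⁻¹' A ∩ G ⁻¹' B) (U ⁻¹' {u}) =
          condPr P (Y ⁻¹' A) (U ⁻¹' {u}) * condPr P (G ⁻¹' B) (U ⁻¹' {u}))
    (ER_YU RR_UG : ℝ)
    (hER : ER_YU = condMean P Y (U ⁻¹' {1}) / condMean P Y (U ⁻¹' {0}))
    (hRR : RR_UG = condPr P (U ⁻¹' {1}) (G ⁻¹' {1}) / condPr P (U ⁻¹' {1}) (G ⁻¹' {0})) :
    |(∫ ω, Y ω ∂P) / condMean P Y (G ⁻¹' {1}) - 1| ≤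
      |(ER_YU - 1) * (RR_UG - 1) / (ER_YU * RR_UG)| * (P (G ⁻¹' {0})).toReal := by
  -- measurable sets
  have hmUg : ∀ u : Fin 2, MeasurableSet (U ⁻¹' {u}) :=
    fun u => hU (measurableSet_singleton u)
  have hmGg : ∀ g : Fin 2, MeasurableSet (G ⁻¹' {g}) :=
    fun g => hG (measurableSet_singleton g)
  have hmS : ∀ u g : Fin 2, MeasurableSet (U ⁻¹' {u} ∩ G ⁻¹' {g}) :=
    fun u g => (hmUg u).inter (hmGg g)
  -- positivity of U-marginals
  have hUpos : ∀ u : Fin 2, 0 < P (U ⁻¹' {u}) :=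
    fun u => lt_of_lt_of_le (hpos u 0) (measure_mono Set.inter_subset_left)
  -- real quantities
  set m0 : ℝ := condMean P Y (U ⁻¹' {0}) with hm0
  set m1 : ℝ := condMean P Y (U ⁻¹' {1}) with hm1
  set s00 : ℝ := (P (U ⁻¹' {0} ∩ G ⁻¹' {0})).toReal with hs00
  set s01 : ℝ := (P (U ⁻¹' {0} ∩ G ⁻¹' {1})).toReal with hs01
  set s10 : ℝ := (P (U ⁻¹' {1} ∩ G ⁻¹' {0})).toReal with hs10
  set s11 : ℝ := (P (U ⁻¹' {1} ∩ G ⁻¹' {1})).toReal with hs11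
  have hs00p : 0 < s00 := ENNReal.toReal_pos (hpos 0 0).ne' (measure_ne_top _ _)
  have hs01p : 0 < s01 := ENNReal.toReal_pos (hpos 0 1).ne' (measure_ne_top _ _)
  have hs10p : 0 < s10 := ENNReal.toReal_pos (hpos 1 0).ne' (measure_ne_top _ _)
  have hs11p : 0 < s11 := ENNReal.toReal_pos (hpos 1 1).ne' (measure_ne_top _ _)
  have hcu : ∀ u : Fin 2, (P (U ⁻¹' {u})).toReal ≠ 0 := by
    intro u
    exact (ENNReal.toReal_pos (hUpos u).ne' (measure_ne_top _ _)).ne'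
  -- the key factorization: ∫_{U=u ∩ G=g} Y = m_u * s_ug
  have hIug : ∀ u g : Fin 2, ∫ ω in U ⁻¹' {u} ∩ G ⁻¹' {g}, Y ω ∂P
      = condMean P Y (U ⁻¹' {u}) * (P (U ⁻¹' {u} ∩ G ⁻¹' {g})).toReal := by
    intro u g
    have hk := key_factor P Y G U hY u g (hUpos u) (hCI u (hUpos u))
    unfold condMean
    rw [div_mul_eq_mul_div, eq_div_iff (hcu u)]
    linarith [hk]
  -- partition facts on Fin 2
  have hunion : ∀ f : Ω → Fin 2, f ⁻¹' {0} ∪ f ⁻¹' {1} = Set.univ := by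
    intro f; ext x
    simp only [Set.mem_union, Set.mem_preimage, Set.mem_singleton_iff, Set.mem_univ, iff_true]
    omega
  have hdisj : ∀ f : Ω → Fin 2, Disjoint (f ⁻¹' {0}) (f ⁻¹' {1}) := by
    intro f
    rw [Set.disjoint_left]
    intro x h0 h1
    simp only [Set.mem_preimage, Set.mem_singleton_iff] at h0 h1
    rw [h0] at h1; exact absurd h1 (by decide)
  -- split of G-preimages by U
  have hsplitG : ∀ g : Fin 2, G ⁻¹' {g}
      = (U ⁻¹' {0} ∩ G ⁻¹' {g}) ∪ (U ⁻¹' {1} ∩ G ⁻¹' {g}) := by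
    intro g
    rw [← Set.union_inter_distrib_right, hunion U, Set.univ_inter]
  have hdisjS : ∀ g : Fin 2,
      Disjoint (U ⁻¹' {0} ∩ G ⁻¹' {g}) (U ⁻¹' {1} ∩ G ⁻¹' {g}) :=
    fun g => ((hdisj U).mono Set.inter_subset_left Set.inter_subset_left)
  -- integral of Y over G-preimage
  have hGint : ∀ g : Fin 2, ∫ ω in G ⁻¹' {g}, Y ω ∂P
      = m0 * (P (U ⁻¹' {0} ∩ G ⁻¹' {g})).toReal
        + m1 * (P (U ⁻¹' {1} ∩ G ⁻¹' {g})).toReal := by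
    intro g
    have h := setIntegral_union (hdisjS g) (hmS 1 g)
      (hYint.integrableOn) (hYint.integrableOn) (f := Y) (μ := P)
    rw [← hsplitG g, hIug 0 g, hIug 1 g] at h
    exact h
  -- P of G-preimage
  have hPG : ∀ g : Fin 2, (P (G ⁻¹' {g})).toReal
      = (P (U ⁻¹' {0} ∩ G ⁻¹' {g})).toReal + (P (U ⁻¹' {1} ∩ G ⁻¹' {g})).toReal := by
    intro g
    have h := measure_union (hdisjS g) (hmS 1 g) (μ := P)
    rw [← hsplitG g] at h
    rw [h, ENNReal.toReal_add (measure_ne_top _ _) (measure_ne_top _ _)]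
  -- total integral
  have hT : ∫ ω, Y ω ∂P = m0 * (s00 + s01) + m1 * (s10 + s11) := by
    have : ∫ ω, Y ω ∂P = (∫ ω in G ⁻¹' {0}, Y ω ∂P) + ∫ ω in G ⁻¹' {1}, Y ω ∂P := by
      rw [← setIntegral_union (hdisj G) (hmGg 1) hYint.integrableOn hYint.integrableOn,
        hunion G, setIntegral_univ]
    rw [this, hGint 0, hGint 1]; ring
  -- sum of probabilities is 1
  have hsum : s00 + s01 + s10 + s11 = 1 := by
    have h1 : (P (Set.univ : Set Ω)).toReal = 1 := by simp
    have : (P (Set.univ : Set Ω)).toReal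
        = (P (G ⁻¹' {0})).toReal + (P (G ⁻¹' {1})).toReal := by
      rw [← hunion G, measure_union (hdisj G) (hmGg 1),
        ENNReal.toReal_add (measure_ne_top _ _) (measure_ne_top _ _)]
    rw [h1, hPG 0, hPG 1] at this
    linarith
  -- rewrite conditional quantities
  have hCM1 : condMean P Y (G ⁻¹' {1}) = (m0 * s01 + m1 * s11) / (s01 + s11) := by
    unfold condMean
    rw [hGint 1, hPG 1]
  have hCP1 : condPr P (U ⁻¹' {1}) (G ⁻¹' {1}) = s11 / (s01 + s11) := by
    unfold condPr
    rw [hPG 1]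
  have hCP0 : condPr P (U ⁻¹' {1}) (G ⁻¹' {0}) = s10 / (s00 + s10) := by
    unfold condPr
    rw [hPG 0]
  have hPG0 : (P (G ⁻¹' {0})).toReal = s00 + s10 := hPG 0
  -- now pure algebra
  rw [hT, hCM1, hPG0, hER, hRR, hCP1, hCP0]
  have hq1 : (0:ℝ) < s01 + s11 := by linarith
  have hw : (0:ℝ) < s00 + s10 := by linarith
  have hD1 : (0:ℝ) < m0 * s01 + m1 * s11 := by positivity
  set Δ : ℝ := s00 * s11 - s01 * s10 with hΔ
  have eL : (m0 * (s00 + s01) + m1 * (s10 + s11)) / ((m0 * s01 + m1 * s11) / (s01 + s11)) - 1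
      = ((m0 - m1) * Δ) / (m0 * s01 + m1 * s11) := by
    rw [div_div_eq_mul_div, div_sub_one hD1.ne']
    congr 1
    rw [hΔ]
    linear_combination (m0 * s01 + m1 * s11) * hsum
  have eR : (m1 / m0 - 1) * (s11 / (s01 + s11) / (s10 / (s00 + s10)) - 1)
        / (m1 / m0 * (s11 / (s01 + s11) / (s10 / (s00 + s10))))
      = ((m1 - m0) * Δ) / (m1 * s11 * (s00 + s10)) := by
    rw [hΔ]
    field_simp
    ring
  rw [eL, eR]
  have habs : |((m1 - m0) * Δ) / (m1 * s11 * (s00 + s10))| * (s00 + s10)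
      = |(m1 - m0) * Δ| / (m1 * s11) := by
    rw [abs_div, abs_of_pos (by positivity : (0:ℝ) < m1 * s11 * (s00 + s10))]
    field_simp
  rw [habs]
  have hflip : |(m0 - m1) * Δ| = |(m1 - m0) * Δ| := by
    rw [show (m0 - m1) * Δ = -((m1 - m0) * Δ) by ring, abs_neg]
  rw [abs_div, abs_of_pos hD1, hflip]
  have hle : m1 * s11 ≤ m0 * s01 + m1 * s11 := by nlinarith
  have h0 : (0:ℝ) < m1 * s11 := by positivity
  exact div_le_div_of_nonneg_left (abs_nonneg _) h0 hle
end

section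
/- Let Y be a square-integrable real random variable, G a {0,1}-valued random variable, and U a {0,1}-valued random variable on a probability space, with P(U=u, G=g) > 0 for all u,g ∈ {0,1}. Assume Y and G are conditionally independent given U. Define ED_YU = E[Y|U=1] − E[Y|U=0], RD_UG = P(U=1|G=1) − P(U=1|G=0), VD_YU = Var(Y|U=0) − Var(Y|U=1), and VD_UG = p₀(1−p₀) − p₁(1−p₁), where p_g = P(U=1|G=g) (so VD_UG is the difference of the conditional variances of U given G=0 and given G=1). Then Var(Y) − Var(Y|G=1) = { VD_YU·RD_UG + ED_YU²·VD_UG + ED_YU²·RD_UG²·P(G=1) } · P(G=0). -/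
open MeasureTheory

/-- Conditional variance `Var(Y | B) = E[Y² | B] − (E[Y | B])²`. -/
noncomputable def condVar {Ω : Type*} [MeasurableSpace Ω] (P : Measure Ω)
    (Y : Ω → ℝ) (B : Set Ω) : ℝ :=
  condMean P (fun ω => Y ω ^ 2) B - (condMean P Y B) ^ 2

private lemma aux_poly (m0 m1 s0 s1 p0 p1 q0 q1 π0 π1 : ℝ)
    (h1 : q0 + q1 = 1) (h2 : π0 + π1 = 1) (h3 : π1 = p0 * q0 + p1 * q1) :
    s0 * π0 + s1 * π1 - (m0 * π0 + m1 * π1) ^ 2 -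
        (s0 * (1 - p1) + s1 * p1 - (m0 * (1 - p1) + m1 * p1) ^ 2) =
      ((s0 - m0 ^ 2 - (s1 - m1 ^ 2)) * (p1 - p0) +
          (m1 - m0) ^ 2 * (p0 * (1 - p0) - p1 * (1 - p1)) +
        (m1 - m0) ^ 2 * (p1 - p0) ^ 2 * q1) * q0 := by
  have hq0 : q0 = 1 - q1 := by linarith
  have hπ0 : π0 = 1 - π1 := by linarith
  subst hq0 hπ0 h3
  ring


set_option maxHeartbeats 2000000 in
/-- **Equation (19) of the paper** (variance decomposition).  With
`ED_YU = E[Y|U=1] − E[Y|U=0]`, `RD_UG = P(U=1|G=1) − P(U=1|G=0)`,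
`VD_YU = Var(Y|U=0) − Var(Y|U=1)` and `VD_UG = p₀(1−p₀) − p₁(1−p₁)` where
`p_g = P(U=1|G=g)`,
`Var(Y) − Var(Y|G=1) = {VD_YU·RD_UG + ED_YU²·VD_UG + ED_YU²·RD_UG²·P(G=1)}·P(G=0)`. -/
theorem variance_bias_decomposition
    {Ω : Type*} [MeasurableSpace Ω] (P : Measure Ω) [IsProbabilityMeasure P]
    (Y : Ω → ℝ) (G U : Ω → Fin 2)
    (hY : Measurable Y) (hYsq : MemLp Y 2 P)
    (hG : Measurable G) (hU : Measurable U)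
    (hpos : ∀ u g : Fin 2, 0 < P (U ⁻¹' {u} ∩ G ⁻¹' {g}))
    -- conditional independence of Y and G given U
    (hCI : ∀ u : Fin 2, 0 < P (U ⁻¹' {u}) →
      ∀ (A : Set ℝ) (B : Set (Fin 2)), MeasurableSet A → MeasurableSet B →
        condPr P (Y ⁻¹' A ∩ G ⁻¹' B) (U ⁻¹' {u}) =
          condPr P (Y ⁻¹' A) (U ⁻¹' {u}) * condPr P (G ⁻¹' B) (U ⁻¹' {u}))
    (ED_YU RD_UG VD_YU VD_UG p₀ p₁ : ℝ)
    (hp₀ : p₀ = condPr P (U ⁻¹' {1}) (G ⁻¹' {0}))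
    (hp₁ : p₁ = condPr P (U ⁻¹' {1}) (G ⁻¹' {1}))
    (hED : ED_YU = condMean P Y (U ⁻¹' {1}) - condMean P Y (U ⁻¹' {0}))
    (hRD : RD_UG = p₁ - p₀)
    (hVD : VD_YU = condVar P Y (U ⁻¹' {0}) - condVar P Y (U ⁻¹' {1}))
    (hVDUG : VD_UG = p₀ * (1 - p₀) - p₁ * (1 - p₁)) :
    ((∫ ω, Y ω ^ 2 ∂P) - (∫ ω, Y ω ∂P) ^ 2) - condVar P Y (G ⁻¹' {1}) =
      (VD_YU * RD_UG + ED_YU ^ 2 * VD_UG +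
          ED_YU ^ 2 * RD_UG ^ 2 * (P (G ⁻¹' {1})).toReal) * (P (G ⁻¹' {0})).toReal := by
  have h2 : ∀ x : Fin 2, x = 0 ∨ x = 1 := by decide
  have hmU : ∀ u : Fin 2, MeasurableSet (U ⁻¹' {u}) := fun u => hU (measurableSet_singleton u)
  have hmG : ∀ g : Fin 2, MeasurableSet (G ⁻¹' {g}) := fun g => hG (measurableSet_singleton g)
  have huniv : ∀ (V : Ω → Fin 2), V ⁻¹' {0} ∪ V ⁻¹' {1} = Set.univ := by
    intro V; ext ω; simpa using h2 (V ω)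
  have hdisj : ∀ (V : Ω → Fin 2), Disjoint (V ⁻¹' {(0:Fin 2)}) (V ⁻¹' {1}) := by
    intro V
    exact Disjoint.preimage V (by simp)
  have hPU : ∀ u, 0 < P (U ⁻¹' {u}) :=
    fun u => lt_of_lt_of_le (hpos u 0) (measure_mono Set.inter_subset_left)
  have hPG : ∀ g, 0 < P (G ⁻¹' {g}) :=
    fun g => lt_of_lt_of_le (hpos 0 g) (measure_mono Set.inter_subset_right)
  -- key product rule in ENNReal
  have hkey : ∀ (u g : Fin 2) (A : Set ℝ), MeasurableSet A →
      P (Y ⁻¹' A ∩ (G ⁻¹' {g} ∩ U ⁻¹' {u})) * P (U ⁻¹' {u}) =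
      P (Y ⁻¹' A ∩ U ⁻¹' {u}) * P (G ⁻¹' {g} ∩ U ⁻¹' {u}) := by
    intro u g A hA
    have h := hCI u (hPU u) A {g} hA (measurableSet_singleton g)
    unfold condPr at h
    have hd : 0 < (P (U ⁻¹' {u})).toReal :=
      ENNReal.toReal_pos (hPU u).ne' (measure_ne_top _ _)
    rw [div_mul_div_comm, div_eq_div_iff hd.ne' (by positivity)] at h
    have h' : (P (Y ⁻¹' A ∩ (G ⁻¹' {g} ∩ U ⁻¹' {u})) * P (U ⁻¹' {u})).toReal
        = (P (Y ⁻¹' A ∩ U ⁻¹' {u}) * P (G ⁻¹' {g} ∩ U ⁻¹' {u})).toReal := by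
      rw [ENNReal.toReal_mul, ENNReal.toReal_mul, ← Set.inter_assoc]
      exact mul_right_cancel₀ hd.ne' (by rw [mul_assoc]; exact h)
    exact ENNReal.toReal_eq_toReal_iff' (ENNReal.mul_ne_top (measure_ne_top _ _) (measure_ne_top _ _))
      (ENNReal.mul_ne_top (measure_ne_top _ _) (measure_ne_top _ _)) |>.mp h'
  -- integral factorization
  have hint : ∀ (f : ℝ → ℝ), Measurable f → ∀ u g : Fin 2,
      ∫ ω in G ⁻¹' {g} ∩ U ⁻¹' {u}, f (Y ω) ∂P
        = ((P (U ⁻¹' {u} ∩ G ⁻¹' {g})).toReal / (P (U ⁻¹' {u})).toReal)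
            * ∫ ω in U ⁻¹' {u}, f (Y ω) ∂P := by
    intro f hf u g
    rw [Set.inter_comm (U ⁻¹' {u}) (G ⁻¹' {g})]
    have hmap : (P.restrict (G ⁻¹' {g} ∩ U ⁻¹' {u})).map Y
        = (P (G ⁻¹' {g} ∩ U ⁻¹' {u}) / P (U ⁻¹' {u})) • ((P.restrict (U ⁻¹' {u})).map Y) := by
      ext A hA
      rw [Measure.map_apply hY hA, Measure.smul_apply, Measure.map_apply hY hA,
        Measure.restrict_apply (hY hA), Measure.restrict_apply (hY hA), smul_eq_mul]
      have hc : P (G ⁻¹' {g} ∩ U ⁻¹' {u}) / P (U ⁻¹' {u}) * P (Y ⁻¹' A ∩ U ⁻¹' {u})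
          = P (Y ⁻¹' A ∩ U ⁻¹' {u}) * P (G ⁻¹' {g} ∩ U ⁻¹' {u}) / P (U ⁻¹' {u}) := by
        rw [div_eq_mul_inv, div_eq_mul_inv]; ring
      rw [hc, ENNReal.eq_div_iff (hPU u).ne' (measure_ne_top _ _), mul_comm]
      exact hkey u g A hA
    calc ∫ ω in G ⁻¹' {g} ∩ U ⁻¹' {u}, f (Y ω) ∂P
        = ∫ x, f x ∂((P.restrict (G ⁻¹' {g} ∩ U ⁻¹' {u})).map Y) :=
          (integral_map hY.aemeasurable hf.aestronglyMeasurable).symm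
      _ = ((P (G ⁻¹' {g} ∩ U ⁻¹' {u})) / P (U ⁻¹' {u})).toReal
            * ∫ x, f x ∂((P.restrict (U ⁻¹' {u})).map Y) := by
          rw [hmap, integral_smul_measure, smul_eq_mul]
      _ = _ := by
          rw [ENNReal.toReal_div, integral_map hY.aemeasurable hf.aestronglyMeasurable]
  -- splitting over U
  have hsplit : ∀ (h : Ω → ℝ), Integrable h P → ∀ (T : Set Ω), MeasurableSet T →
      ∫ ω in T, h ω ∂P = (∫ ω in T ∩ U ⁻¹' {0}, h ω ∂P) + ∫ ω in T ∩ U ⁻¹' {1}, h ω ∂P := by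
    intro h hh T hT
    have hTeq : T ∩ U ⁻¹' {0} ∪ T ∩ U ⁻¹' {1} = T := by
      rw [← Set.inter_union_distrib_left, huniv, Set.inter_univ]
    rw [← hTeq, setIntegral_union ((hdisj U).mono Set.inter_subset_right Set.inter_subset_right)
      (hT.inter (hmU 1)) hh.integrableOn hh.integrableOn, hTeq]
  have hY1 : Integrable Y P := hYsq.integrable one_le_two
  have hY2 : Integrable (fun ω => Y ω ^ 2) P := hYsq.integrable_sq
  -- measure additivity facts
  have haddU : ∀ u : Fin 2, P (U ⁻¹' {u})
      = P (U ⁻¹' {u} ∩ G ⁻¹' {0}) + P (U ⁻¹' {u} ∩ G ⁻¹' {1}) := by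
    intro u
    conv_lhs => rw [← Set.inter_univ (U ⁻¹' {u}), ← huniv G, Set.inter_union_distrib_left]
    exact measure_union ((hdisj G).mono Set.inter_subset_right Set.inter_subset_right)
      ((hmU u).inter (hmG 1))
  have haddG : ∀ g : Fin 2, P (G ⁻¹' {g})
      = P (U ⁻¹' {0} ∩ G ⁻¹' {g}) + P (U ⁻¹' {1} ∩ G ⁻¹' {g}) := by
    intro g
    conv_lhs => rw [← Set.univ_inter (G ⁻¹' {g}), ← huniv U, Set.union_inter_distrib_right]
    exact measure_union (((hdisj U).mono Set.inter_subset_left Set.inter_subset_left))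
      ((hmU 1).inter (hmG g))
  have haddTot : P (G ⁻¹' {(0:Fin 2)}) + P (G ⁻¹' {(1:Fin 2)}) = 1 := by
    rw [← measure_union (hdisj G) (hmG 1), huniv, measure_univ]
  -- real versions
  have hπ0R : (P (U ⁻¹' {(0:Fin 2)})).toReal
      = (P (U ⁻¹' {(0:Fin 2)} ∩ G ⁻¹' {0})).toReal + (P (U ⁻¹' {(0:Fin 2)} ∩ G ⁻¹' {1})).toReal := by
    rw [haddU 0, ENNReal.toReal_add (measure_ne_top _ _) (measure_ne_top _ _)]
  have hπ1R : (P (U ⁻¹' {(1:Fin 2)})).toReal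
      = (P (U ⁻¹' {(1:Fin 2)} ∩ G ⁻¹' {0})).toReal + (P (U ⁻¹' {(1:Fin 2)} ∩ G ⁻¹' {1})).toReal := by
    rw [haddU 1, ENNReal.toReal_add (measure_ne_top _ _) (measure_ne_top _ _)]
  have hq0R : (P (G ⁻¹' {(0:Fin 2)})).toReal
      = (P (U ⁻¹' {(0:Fin 2)} ∩ G ⁻¹' {0})).toReal + (P (U ⁻¹' {(1:Fin 2)} ∩ G ⁻¹' {0})).toReal := by
    rw [haddG 0, ENNReal.toReal_add (measure_ne_top _ _) (measure_ne_top _ _)]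
  have hq1R : (P (G ⁻¹' {(1:Fin 2)})).toReal
      = (P (U ⁻¹' {(0:Fin 2)} ∩ G ⁻¹' {1})).toReal + (P (U ⁻¹' {(1:Fin 2)} ∩ G ⁻¹' {1})).toReal := by
    rw [haddG 1, ENNReal.toReal_add (measure_ne_top _ _) (measure_ne_top _ _)]
  have htot : (P (G ⁻¹' {(0:Fin 2)})).toReal + (P (G ⁻¹' {(1:Fin 2)})).toReal = 1 := by
    rw [← ENNReal.toReal_add (measure_ne_top _ _) (measure_ne_top _ _), haddTot]; rfl
  have hrpos : ∀ u g : Fin 2, 0 < (P (U ⁻¹' {u} ∩ G ⁻¹' {g})).toReal := fun u g =>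
    ENNReal.toReal_pos (hpos u g).ne' (measure_ne_top _ _)
  -- integral decompositions
  have hIY : (∫ ω, Y ω ∂P) = (∫ ω in U ⁻¹' {(0:Fin 2)}, Y ω ∂P) + ∫ ω in U ⁻¹' {1}, Y ω ∂P := by
    simpa using hsplit Y hY1 Set.univ MeasurableSet.univ
  have hIY2 : (∫ ω, Y ω ^ 2 ∂P)
      = (∫ ω in U ⁻¹' {(0:Fin 2)}, Y ω ^ 2 ∂P) + ∫ ω in U ⁻¹' {1}, Y ω ^ 2 ∂P := by
    simpa using hsplit (fun ω => Y ω ^ 2) hY2 Set.univ MeasurableSet.univ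
  have hGY : (∫ ω in G ⁻¹' {(1:Fin 2)}, Y ω ∂P)
      = ((P (U ⁻¹' {(0:Fin 2)} ∩ G ⁻¹' {1})).toReal / (P (U ⁻¹' {(0:Fin 2)})).toReal)
          * (∫ ω in U ⁻¹' {(0:Fin 2)}, Y ω ∂P)
        + ((P (U ⁻¹' {(1:Fin 2)} ∩ G ⁻¹' {1})).toReal / (P (U ⁻¹' {(1:Fin 2)})).toReal)
          * ∫ ω in U ⁻¹' {1}, Y ω ∂P := by
    have h := hsplit Y hY1 (G ⁻¹' {1}) (hmG 1)
    have h0 := hint (fun x => x) measurable_id 0 1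
    have h1 := hint (fun x => x) measurable_id 1 1
    rw [h, h0, h1]
  have hGY2 : (∫ ω in G ⁻¹' {(1:Fin 2)}, Y ω ^ 2 ∂P)
      = ((P (U ⁻¹' {(0:Fin 2)} ∩ G ⁻¹' {1})).toReal / (P (U ⁻¹' {(0:Fin 2)})).toReal)
          * (∫ ω in U ⁻¹' {(0:Fin 2)}, Y ω ^ 2 ∂P)
        + ((P (U ⁻¹' {(1:Fin 2)} ∩ G ⁻¹' {1})).toReal / (P (U ⁻¹' {(1:Fin 2)})).toReal)
          * ∫ ω in U ⁻¹' {1}, Y ω ^ 2 ∂P := by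
    have h := hsplit (fun ω => Y ω ^ 2) hY2 (G ⁻¹' {1}) (hmG 1)
    have h0 := hint (fun x => x ^ 2) (measurable_id.pow_const 2) 0 1
    have h1 := hint (fun x => x ^ 2) (measurable_id.pow_const 2) 1 1
    rw [h, h0, h1]
  -- unfold definitions and finish by algebra
  subst hp₀ hp₁ hED hRD hVD hVDUG
  simp only [condVar, condMean, condPr]
  rw [hIY, hIY2, hGY, hGY2, hπ0R, hπ1R, hq0R, hq1R]
  rw [hq0R, hq1R] at htot
  set r00 := (P (U ⁻¹' {(0:Fin 2)} ∩ G ⁻¹' {0})).toReal with hr00d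
  set r01 := (P (U ⁻¹' {(0:Fin 2)} ∩ G ⁻¹' {1})).toReal with hr01d
  set r10 := (P (U ⁻¹' {(1:Fin 2)} ∩ G ⁻¹' {0})).toReal with hr10d
  set r11 := (P (U ⁻¹' {(1:Fin 2)} ∩ G ⁻¹' {1})).toReal with hr11d
  have p00 : 0 < r00 := by rw [hr00d]; exact hrpos 0 0
  have p01 : 0 < r01 := by rw [hr01d]; exact hrpos 0 1
  have p10 : 0 < r10 := by rw [hr10d]; exact hrpos 1 0
  have p11 : 0 < r11 := by rw [hr11d]; exact hrpos 1 1
  set M0 := ∫ ω in U ⁻¹' {(0:Fin 2)}, Y ω ∂P with hM0d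
  set M1 := ∫ ω in U ⁻¹' {(1:Fin 2)}, Y ω ∂P with hM1d
  set S0 := ∫ ω in U ⁻¹' {(0:Fin 2)}, Y ω ^ 2 ∂P with hS0d
  set S1 := ∫ ω in U ⁻¹' {(1:Fin 2)}, Y ω ^ 2 ∂P with hS1d
  have hπ0p : (0:ℝ) < r00 + r01 := by positivity
  have hπ1p : (0:ℝ) < r10 + r11 := by positivity
  have hq0p : (0:ℝ) < r00 + r10 := by positivity
  have hq1p : (0:ℝ) < r01 + r11 := by positivity
  have c1 : S0 + S1 = S0 / (r00 + r01) * (r00 + r01) + S1 / (r10 + r11) * (r10 + r11) := by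
    field_simp
  have c2 : M0 + M1 = M0 / (r00 + r01) * (r00 + r01) + M1 / (r10 + r11) * (r10 + r11) := by
    field_simp
  have c3 : (r01 / (r00 + r01) * S0 + r11 / (r10 + r11) * S1) / (r01 + r11)
      = S0 / (r00 + r01) * (1 - r11 / (r01 + r11)) + S1 / (r10 + r11) * (r11 / (r01 + r11)) := by
    field_simp; ring
  have c4 : (r01 / (r00 + r01) * M0 + r11 / (r10 + r11) * M1) / (r01 + r11)
      = M0 / (r00 + r01) * (1 - r11 / (r01 + r11)) + M1 / (r10 + r11) * (r11 / (r01 + r11)) := by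
    field_simp; ring
  rw [c1, c2, c3, c4]
  exact aux_poly (M0 / (r00 + r01)) (M1 / (r10 + r11)) (S0 / (r00 + r01)) (S1 / (r10 + r11))
    (r10 / (r00 + r10)) (r11 / (r01 + r11)) (r00 + r10) (r01 + r11) (r00 + r01) (r10 + r11)
    (by linarith) (by linarith) (by field_simp)
end

section
/- Let Y be an integrable real random variable, G a {0,1}-valued random variable, and U a random variable taking values in a finite set {u₁,…,u_m} of m ≥ 2 elements, on a probability space with P(U=uᵢ, G=g) > 0 for all i and g ∈ {0,1}. Assume Y and G are conditionally independent given U. Define MD_YU = maxᵢ E[Y|U=uᵢ] − minᵢ E[Y|U=uᵢ] and MD_UG = maxᵢ ( P(U=uᵢ|G=1) − P(U=uᵢ|G=0) ). Then |E[Y] − E[Y|G=1]| ≤ (m−1) · |MD_YU · MD_UG| · P(G=0). -/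
open MeasureTheory

lemma sum_mul_bound {α : Type*} [Fintype α] [Nonempty α] (e d : α → ℝ)
    (hd : ∑ u, d u = 0) (a b M : ℝ)
    (ha : ∀ u, a ≤ e u) (hb : ∀ u, e u ≤ b) (hM : ∀ u, d u ≤ M) :
    |∑ u, e u * d u| ≤ ((Fintype.card α : ℝ) - 1) * ((b - a) * M) := by
  have hcard : 0 < Fintype.card α := Fintype.card_pos
  classical
  have hM0 : 0 ≤ M := by
    have h1 : (0:ℝ) ≤ (Fintype.card α : ℝ) * M := by
      calc (0:ℝ) = ∑ u : α, d u := hd.symm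
      _ ≤ ∑ _u : α, M := Finset.sum_le_sum (fun u _ => hM u)
      _ = (Fintype.card α : ℝ) * M := by simp [Finset.sum_const, nsmul_eq_mul]
    have h2 : (0:ℝ) < (Fintype.card α : ℝ) := by exact_mod_cast hcard
    nlinarith
  have hba : 0 ≤ b - a := by
    obtain ⟨u⟩ := ‹Nonempty α›
    linarith [ha u, hb u]
  set S : ℝ := ∑ u, max (d u) 0 with hS
  have hSmin : ∑ u, min (d u) 0 = -S := by
    have : ∑ u, (max (d u) 0 + min (d u) 0) = 0 := by
      simp only [max_add_min]; simpa using hd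
    rw [Finset.sum_add_distrib] at this
    linarith [this]
  obtain ⟨u₀, hu₀⟩ : ∃ u₀, d u₀ ≤ 0 := by
    by_contra h
    push_neg at h
    have : 0 < ∑ u : α, d u :=
      Finset.sum_pos (fun u _ => h u) Finset.univ_nonempty
    linarith
  have hSle : S ≤ ((Fintype.card α : ℝ) - 1) * M := by
    have h0 : max (d u₀) 0 = 0 := max_eq_right hu₀
    have : S = ∑ u ∈ Finset.univ.erase u₀, max (d u) 0 :=
      (Finset.sum_erase (f := fun u => max (d u) 0) Finset.univ h0).symm
    rw [this]
    have hle : ∑ u ∈ Finset.univ.erase u₀, max (d u) 0 ≤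
        (Finset.univ.erase u₀).card • M :=
      Finset.sum_le_card_nsmul _ _ M (fun u _ => max_le (hM u) hM0)
    have hc : (Finset.univ.erase u₀).card = Fintype.card α - 1 := by
      rw [Finset.card_erase_of_mem (Finset.mem_univ _)]; rfl
    rw [hc, nsmul_eq_mul] at hle
    rwa [Nat.cast_sub hcard, Nat.cast_one] at hle
  have hup : ∑ u, e u * d u ≤ (b - a) * S := by
    have : ∑ u, e u * d u = ∑ u, (e u - a) * d u := by
      simp only [sub_mul, Finset.sum_sub_distrib, ← Finset.mul_sum, hd, mul_zero, sub_zero]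
    rw [this, hS, Finset.mul_sum]
    refine Finset.sum_le_sum fun u _ => ?_
    rcases le_or_gt 0 (d u) with h | h
    · rw [max_eq_left h]
      exact mul_le_mul_of_nonneg_right (by linarith [hb u]) h
    · rw [max_eq_right h.le, mul_zero]
      exact mul_nonpos_of_nonneg_of_nonpos (by linarith [ha u]) h.le
  have hlo : -((b - a) * S) ≤ ∑ u, e u * d u := by
    have h1 : ∑ u, e u * d u = ∑ u, (e u - a) * d u := by
      simp only [sub_mul, Finset.sum_sub_distrib, ← Finset.mul_sum, hd, mul_zero, sub_zero]
    have h2 : (b - a) * ∑ u, min (d u) 0 ≤ ∑ u, (e u - a) * d u := by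
      rw [Finset.mul_sum]
      refine Finset.sum_le_sum fun u _ => ?_
      rcases le_or_gt 0 (d u) with h | h
      · rw [min_eq_right h]; rw [mul_zero]
        exact mul_nonneg (by linarith [ha u]) h
      · rw [min_eq_left h.le]
        exact mul_le_mul_of_nonpos_right (by linarith [hb u]) h.le
    rw [hSmin] at h2
    rw [h1]; linarith
  have hS0 : 0 ≤ S := Finset.sum_nonneg fun u _ => le_max_right _ _
  rw [abs_le]
  constructor
  · have := mul_le_mul_of_nonneg_left hSle hba
    nlinarith
  · have := mul_le_mul_of_nonneg_left hSle hba
    nlinarith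

lemma halg1 (x y z p : ℝ) (hp : p ≠ 0) (h1 : x / p = y / p * (z / p)) :
    x = y * (z / p) := by
  rw [div_mul_div_comm, div_eq_div_iff hp (mul_ne_zero hp hp)] at h1
  rw [← mul_div_assoc, eq_div_iff hp]
  exact mul_right_cancel₀ hp (by linear_combination h1)

lemma halg2 (z p ee : ℝ) (hp : p ≠ 0) : z / p * (ee * p) = ee * z := by
  field_simp

lemma ci_set_integral {Ω : Type*} [MeasurableSpace Ω] (P : Measure Ω) [IsFiniteMeasure P]
    (Y : Ω → ℝ) (hY : Measurable Y) (S T : Set Ω)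
    (c : ℝ) (hc : 0 ≤ c)
    (h : ∀ A : Set ℝ, MeasurableSet A →
      (P (Y ⁻¹' A ∩ T ∩ S)).toReal = (P (Y ⁻¹' A ∩ S)).toReal * c) :
    ∫ ω in T ∩ S, Y ω ∂P = c * ∫ ω in S, Y ω ∂P := by
  have key : Measure.map Y (P.restrict (T ∩ S)) =
      ENNReal.ofReal c • Measure.map Y (P.restrict S) := by
    ext A hA
    rw [Measure.map_apply hY hA, Measure.smul_apply, Measure.map_apply hY hA,
      Measure.restrict_apply (hY hA), Measure.restrict_apply (hY hA), smul_eq_mul]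
    have hfin : ENNReal.ofReal c * P (Y ⁻¹' A ∩ S) ≠ ⊤ :=
      ENNReal.mul_ne_top ENNReal.ofReal_ne_top (measure_ne_top _ _)
    refine (ENNReal.toReal_eq_toReal_iff' (measure_ne_top _ _) hfin).mp ?_
    rw [ENNReal.toReal_mul, ENNReal.toReal_ofReal hc, ← Set.inter_assoc, h A hA, mul_comm]
  calc ∫ ω in T ∩ S, Y ω ∂P
      = ∫ x, id x ∂(Measure.map Y (P.restrict (T ∩ S))) :=
        (integral_map hY.aemeasurable aestronglyMeasurable_id).symm
    _ = ∫ x, id x ∂(ENNReal.ofReal c • Measure.map Y (P.restrict S)) := by rw [key]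
    _ = (ENNReal.ofReal c).toReal • ∫ x, id x ∂(Measure.map Y (P.restrict S)) :=
        integral_smul_measure _ _
    _ = c * ∫ ω in S, Y ω ∂P := by
        rw [integral_map hY.aemeasurable aestronglyMeasurable_id,
          ENNReal.toReal_ofReal hc, smul_eq_mul]
        rfl

/-- **Inequality (16) of the paper** (categorical confounder, difference scale).
For a confounder `U` with `m ≥ 2` categories, with
`MD_YU = maxᵢ E[Y|U=uᵢ] − minᵢ E[Y|U=uᵢ]` and
`MD_UG = maxᵢ (P(U=uᵢ|G=1) − P(U=uᵢ|G=0))`,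
`|E[Y] − E[Y|G=1]| ≤ (m−1)·|MD_YU · MD_UG|·P(G=0)`. -/
theorem categorical_confounder_difference_bound
    {Ω α : Type*} [MeasurableSpace Ω]
    [MeasurableSpace α] [Fintype α] [Nonempty α] [MeasurableSingletonClass α]
    (P : Measure Ω) [IsProbabilityMeasure P]
    (Y : Ω → ℝ) (G : Ω → Fin 2) (U : Ω → α)
    (hY : Measurable Y) (hYint : Integrable Y P)
    (hG : Measurable G) (hU : Measurable U)
    (m : ℕ) (hm : m = Fintype.card α) (hm2 : 2 ≤ m)
    (hpos : ∀ (u : α) (g : Fin 2), 0 < P (U ⁻¹' {u} ∩ G ⁻¹' {g}))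
    -- conditional independence of Y and G given U
    (hCI : ∀ u : α, 0 < P (U ⁻¹' {u}) →
      ∀ (A : Set ℝ) (B : Set (Fin 2)), MeasurableSet A → MeasurableSet B →
        condPr P (Y ⁻¹' A ∩ G ⁻¹' B) (U ⁻¹' {u}) =
          condPr P (Y ⁻¹' A) (U ⁻¹' {u}) * condPr P (G ⁻¹' B) (U ⁻¹' {u}))
    (MD_YU MD_UG : ℝ)
    (hMDYU : MD_YU =
      Finset.univ.sup' Finset.univ_nonempty (fun u : α => condMean P Y (U ⁻¹' {u})) -
        Finset.univ.inf' Finset.univ_nonempty (fun u : α => condMean P Y (U ⁻¹' {u})))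
    (hMDUG : MD_UG =
      Finset.univ.sup' Finset.univ_nonempty (fun u : α =>
        condPr P (U ⁻¹' {u}) (G ⁻¹' {1}) - condPr P (U ⁻¹' {u}) (G ⁻¹' {0}))) :
    |(∫ ω, Y ω ∂P) - condMean P Y (G ⁻¹' {1})| ≤
      ((m : ℝ) - 1) * |MD_YU * MD_UG| * (P (G ⁻¹' {0})).toReal := by
  classical
  have hSU : ∀ u : α, MeasurableSet (U ⁻¹' {u}) := fun u => hU (measurableSet_singleton u)
  have hSG : ∀ g : Fin 2, MeasurableSet (G ⁻¹' {g}) := fun g => hG (measurableSet_singleton g)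
  have hUpos : ∀ u, 0 < P (U ⁻¹' {u}) := fun u =>
    lt_of_lt_of_le (hpos u 0) (measure_mono Set.inter_subset_left)
  have hGpos : ∀ g : Fin 2, 0 < P (G ⁻¹' {g}) := fun g =>
    lt_of_lt_of_le (hpos (Classical.arbitrary α) g) (measure_mono Set.inter_subset_right)
  have hpUpos : ∀ u, 0 < (P (U ⁻¹' {u})).toReal := fun u =>
    ENNReal.toReal_pos (hUpos u).ne' (measure_ne_top _ _)
  have hpGpos : ∀ g : Fin 2, 0 < (P (G ⁻¹' {g})).toReal := fun g =>
    ENNReal.toReal_pos (hGpos g).ne' (measure_ne_top _ _)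
  set e : α → ℝ := fun u => condMean P Y (U ⁻¹' {u}) with he
  have hIntU : ∀ u, ∫ ω in U ⁻¹' {u}, Y ω ∂P = e u * (P (U ⁻¹' {u})).toReal := by
    intro u
    rw [he]
    simp only [condMean]
    rw [div_mul_cancel₀ _ (hpUpos u).ne']
  have hdisjU : Pairwise (Function.onFun Disjoint fun u : α => U ⁻¹' {u}) := by
    intro u v huv
    simp only [Function.onFun, Set.disjoint_left]
    intro ω h1 h2
    simp only [Set.mem_preimage, Set.mem_singleton_iff] at h1 h2
    exact huv (h1 ▸ h2 ▸ rfl)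
  have hUnionU : ⋃ u : α, U ⁻¹' {u} = Set.univ := by
    ext ω; simp
  have h1 : ∫ ω, Y ω ∂P = ∑ u : α, e u * (P (U ⁻¹' {u})).toReal := by
    rw [← setIntegral_univ (μ := P) (f := Y), ← hUnionU,
      integral_iUnion_fintype (fun u => hSU u) hdisjU (fun u => hYint.integrableOn)]
    exact Finset.sum_congr rfl fun u _ => hIntU u
  -- conditional independence step
  have hCIu : ∀ u : α, ∫ ω in G ⁻¹' {1} ∩ U ⁻¹' {u}, Y ω ∂P
      = e u * (P (G ⁻¹' {1} ∩ U ⁻¹' {u})).toReal := by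
    intro u
    set c : ℝ := (P (G ⁻¹' {1} ∩ U ⁻¹' {u})).toReal / (P (U ⁻¹' {u})).toReal with hc
    have hc0 : 0 ≤ c := div_nonneg ENNReal.toReal_nonneg (hpUpos u).le
    have happ : ∀ A : Set ℝ, MeasurableSet A →
        (P (Y ⁻¹' A ∩ G ⁻¹' {1} ∩ U ⁻¹' {u})).toReal
          = (P (Y ⁻¹' A ∩ U ⁻¹' {u})).toReal * c := by
      intro A hA
      have hthis := hCI u (hUpos u) A {1} hA (measurableSet_singleton 1)
      simp only [condPr] at hthis
      rw [hc]
      exact halg1 _ _ _ _ (hpUpos u).ne' hthis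
    have hkey := ci_set_integral P Y hY (U ⁻¹' {u}) (G ⁻¹' {1}) c hc0 happ
    rw [hkey, hIntU u, hc]
    exact halg2 _ _ _ (hpUpos u).ne'
  have h2 : ∫ ω in G ⁻¹' {1}, Y ω ∂P
      = ∑ u : α, e u * (P (G ⁻¹' {1} ∩ U ⁻¹' {u})).toReal := by
    have hun : ⋃ u : α, (G ⁻¹' {1} ∩ U ⁻¹' {u}) = G ⁻¹' {1} := by
      rw [← Set.inter_iUnion, hUnionU, Set.inter_univ]
    calc ∫ ω in G ⁻¹' {1}, Y ω ∂P
        = ∫ ω in ⋃ u : α, (G ⁻¹' {1} ∩ U ⁻¹' {u}), Y ω ∂P := by rw [hun]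
      _ = ∑ u : α, ∫ ω in G ⁻¹' {1} ∩ U ⁻¹' {u}, Y ω ∂P :=
          integral_iUnion_fintype (fun u => (hSG 1).inter (hSU u))
            (fun u v huv => (hdisjU huv).mono Set.inter_subset_right Set.inter_subset_right)
            (fun u => hYint.integrableOn)
      _ = ∑ u : α, e u * (P (G ⁻¹' {1} ∩ U ⁻¹' {u})).toReal :=
          Finset.sum_congr rfl fun u _ => hCIu u
  -- measure decompositions
  have hmeas_dec : ∀ g : Fin 2,
      ∑ u : α, (P (U ⁻¹' {u} ∩ G ⁻¹' {g})).toReal = (P (G ⁻¹' {g})).toReal := by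
    intro g
    have hun : ⋃ u : α, (U ⁻¹' {u} ∩ G ⁻¹' {g}) = G ⁻¹' {g} := by
      rw [← Set.iUnion_inter, hUnionU, Set.univ_inter]
    have hmu : P (G ⁻¹' {g}) = ∑ u : α, P (U ⁻¹' {u} ∩ G ⁻¹' {g}) := by
      conv_lhs => rw [← hun]
      rw [measure_iUnion
        (fun u v huv => (hdisjU huv).mono Set.inter_subset_left Set.inter_subset_left)
        (fun u => (hSU u).inter (hSG g)), tsum_fintype]
    rw [hmu, ENNReal.toReal_sum (fun u _ => measure_ne_top _ _)]
  have hft : ∀ g : Fin 2, g = 0 ∨ g = 1 := by decide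
  have hGunion : G ⁻¹' {(0 : Fin 2)} ∪ G ⁻¹' {1} = Set.univ := by
    ext ω
    simp only [Set.mem_union, Set.mem_preimage, Set.mem_singleton_iff, Set.mem_univ, iff_true]
    exact hft (G ω)
  have hGdisj : Disjoint (G ⁻¹' {(0 : Fin 2)}) (G ⁻¹' {1}) := by
    rw [Set.disjoint_left]
    intro ω h1 h2
    simp only [Set.mem_preimage, Set.mem_singleton_iff] at h1 h2
    exact absurd (h1 ▸ h2 ▸ rfl : (0 : Fin 2) = 1) (by decide)
  have htot : ∀ u : α, (P (U ⁻¹' {u})).toReal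
      = (P (U ⁻¹' {u} ∩ G ⁻¹' {0})).toReal + (P (U ⁻¹' {u} ∩ G ⁻¹' {1})).toReal := by
    intro u
    have hsplit : U ⁻¹' {u} = (U ⁻¹' {u} ∩ G ⁻¹' {0}) ∪ (U ⁻¹' {u} ∩ G ⁻¹' {1}) := by
      rw [← Set.inter_union_distrib_left, hGunion, Set.inter_univ]
    calc (P (U ⁻¹' {u})).toReal
        = (P ((U ⁻¹' {u} ∩ G ⁻¹' {0}) ∪ (U ⁻¹' {u} ∩ G ⁻¹' {1}))).toReal := by rw [← hsplit]
      _ = (P (U ⁻¹' {u} ∩ G ⁻¹' {0})).toReal + (P (U ⁻¹' {u} ∩ G ⁻¹' {1})).toReal := by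
          rw [measure_union (hGdisj.mono Set.inter_subset_right Set.inter_subset_right)
            ((hSU u).inter (hSG 1)),
            ENNReal.toReal_add (measure_ne_top _ _) (measure_ne_top _ _)]
  have hpG01 : (P (G ⁻¹' {(0:Fin 2)})).toReal + (P (G ⁻¹' {(1:Fin 2)})).toReal = 1 := by
    rw [← ENNReal.toReal_add (measure_ne_top _ _) (measure_ne_top _ _),
      ← measure_union hGdisj (hSG 1), hGunion, measure_univ, ENNReal.toReal_one]
  set q : Fin 2 → α → ℝ := fun g u => condPr P (U ⁻¹' {u}) (G ⁻¹' {g}) with hq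
  have hqsum : ∀ g : Fin 2, ∑ u : α, q g u = 1 := by
    intro g
    rw [hq]
    simp only [condPr]
    rw [← Finset.sum_div, hmeas_dec g, div_self (hpGpos g).ne']
  have hpUq : ∀ u : α, (P (U ⁻¹' {u})).toReal
      = (P (G ⁻¹' {(0:Fin 2)})).toReal * q 0 u + (P (G ⁻¹' {(1:Fin 2)})).toReal * q 1 u := by
    intro u
    rw [htot u, hq]
    simp only [condPr]
    rw [mul_div_cancel₀ _ (hpGpos 0).ne', mul_div_cancel₀ _ (hpGpos 1).ne']
  have hcm1 : condMean P Y (G ⁻¹' {1}) = ∑ u : α, e u * q 1 u := by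
    simp only [condMean]
    rw [h2, Finset.sum_div]
    refine Finset.sum_congr rfl fun u _ => ?_
    rw [hq]
    simp only [condPr]
    rw [Set.inter_comm (G ⁻¹' {1}) (U ⁻¹' {u}), mul_div_assoc]
  set d : α → ℝ := fun u => q 1 u - q 0 u with hd
  have hdsum : ∑ u : α, d u = 0 := by
    rw [hd]
    simp only
    rw [Finset.sum_sub_distrib, hqsum 0, hqsum 1, sub_self]
  have hdiff : (∫ ω, Y ω ∂P) - condMean P Y (G ⁻¹' {1})
      = -((P (G ⁻¹' {(0:Fin 2)})).toReal * ∑ u : α, e u * d u) := by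
    rw [h1, hcm1, ← Finset.sum_sub_distrib, Finset.mul_sum, ← Finset.sum_neg_distrib]
    refine Finset.sum_congr rfl fun u _ => ?_
    rw [hpUq u, hd]
    simp only
    linear_combination (e u * q 1 u) * hpG01
  -- bounds
  set aa := Finset.univ.inf' Finset.univ_nonempty e with haa
  set bb := Finset.univ.sup' Finset.univ_nonempty e with hbb
  have hainf : ∀ u, aa ≤ e u := fun u => Finset.inf'_le _ (Finset.mem_univ u)
  have hbsup : ∀ u, e u ≤ bb := fun u => Finset.le_sup' _ (Finset.mem_univ u)
  have hdM : ∀ u, d u ≤ MD_UG := by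
    intro u
    rw [hMDUG]
    exact Finset.le_sup' _ (Finset.mem_univ u)
  have hMDYU' : MD_YU = bb - aa := hMDYU
  have hkey := sum_mul_bound e d hdsum aa bb MD_UG hainf hbsup hdM
  have hMDYU0 : 0 ≤ MD_YU := by
    obtain ⟨u⟩ := ‹Nonempty α›
    rw [hMDYU']
    linarith [hainf u, hbsup u]
  have hMDUG0 : 0 ≤ MD_UG := by
    have hcard : 0 < Fintype.card α := Fintype.card_pos
    have h1 : (0:ℝ) ≤ (Fintype.card α : ℝ) * MD_UG := by
      calc (0:ℝ) = ∑ u : α, d u := hdsum.symm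
      _ ≤ ∑ _u : α, MD_UG := Finset.sum_le_sum (fun u _ => hdM u)
      _ = (Fintype.card α : ℝ) * MD_UG := by simp [Finset.sum_const, nsmul_eq_mul]
    have h2 : (0:ℝ) < (Fintype.card α : ℝ) := by exact_mod_cast hcard
    nlinarith
  have hpG0 : 0 ≤ (P (G ⁻¹' {(0:Fin 2)})).toReal := ENNReal.toReal_nonneg
  rw [hdiff, abs_neg, abs_mul, abs_of_nonneg hpG0,
    abs_of_nonneg (mul_nonneg hMDYU0 hMDUG0)]
  have hmcast : ((m : ℝ) - 1) = ((Fintype.card α : ℝ) - 1) := by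
    rw [hm]
  rw [hmcast, hMDYU']
  calc (P (G ⁻¹' {(0:Fin 2)})).toReal * |∑ u : α, e u * d u|
      ≤ (P (G ⁻¹' {(0:Fin 2)})).toReal * (((Fintype.card α : ℝ) - 1) * ((bb - aa) * MD_UG)) :=
        mul_le_mul_of_nonneg_left hkey hpG0
    _ = ((Fintype.card α : ℝ) - 1) * ((bb - aa) * MD_UG) * (P (G ⁻¹' {(0:Fin 2)})).toReal := by
        ring
end

section
/- Let c > 0, and set x* = max{c, √c} and y* = min{1, √c}. Then the pair (x*, y*) is feasible, i.e. x* > 0, 0 < y* ≤ 1, and x*·y* ≥ c; and it minimizes the squared distance to the origin over the feasible set: for every pair of real numbers (x, y) with x > 0, 0 < y ≤ 1 and x·y ≥ c, one has x² + y² ≥ x*² + y*². -/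
/-!
Below `c = 1` the constraint `x * y ≥ c` is the binding one, and AM-GM `2xy ≤ x² + y²`
shows the symmetric point `(√c, √c)` is optimal. Above `c = 1` the symmetric point
violates `y ≤ 1`, so the optimum sits at the corner `(c, 1)`: after multiplying by `y²`,
the excess `x² + y² - c² - 1` is bounded below by `(c² - y²)(1 - y²) ≥ 0`.
-/

theorem sqrt_sq_add_sqrt_sq_le_of_le_mul {c x y : ℝ} (hc : 0 ≤ c) (h : c ≤ x * y) :
    √c ^ 2 + √c ^ 2 ≤ x ^ 2 + y ^ 2 := by
  rw [Real.sq_sqrt hc]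
  linarith [two_mul_le_add_sq x y]

theorem sq_add_one_le_of_le_mul {R : Type*} [CommRing R] [LinearOrder R] [IsStrictOrderedRing R]
    {c x y : R} (hc : 1 ≤ c) (hy₀ : 0 < y) (hy₁ : y ≤ 1) (h : c ≤ x * y) :
    c ^ 2 + 1 ≤ x ^ 2 + y ^ 2 := by
  have hsq : c ^ 2 ≤ (x * y) ^ 2 := pow_le_pow_left₀ (by linarith) h 2
  have hy_sq : y ^ 2 ≤ 1 := pow_le_one₀ hy₀.le hy₁
  have hcorner : 0 ≤ (c ^ 2 - y ^ 2) * (1 - y ^ 2) :=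
    mul_nonneg (by nlinarith) (by linarith)
  suffices (c ^ 2 + 1) * y ^ 2 ≤ (x ^ 2 + y ^ 2) * y ^ 2 from
    le_of_mul_le_mul_right this (by positivity)
  nlinarith

/-- **MinNI on the difference scale, continuous outcome.**  For `c > 0`, the pair
`(x*, y*) = (max{c, √c}, min{1, √c})` is feasible — `x* > 0`, `0 < y* ≤ 1`,
`x*·y* ≥ c` — and minimizes the squared distance to the origin over the feasible set
`{(x, y) : x > 0, 0 < y ≤ 1, x·y ≥ c}`. -/
theorem minNI_difference_scale_continuous (c : ℝ) (hc : 0 < c)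
    (xstar ystar : ℝ)
    (hx : xstar = max c (Real.sqrt c)) (hy : ystar = min 1 (Real.sqrt c)) :
    (0 < xstar ∧ 0 < ystar ∧ ystar ≤ 1 ∧ c ≤ xstar * ystar) ∧
    ∀ x y : ℝ, 0 < x → 0 < y → y ≤ 1 → c ≤ x * y →
      xstar ^ 2 + ystar ^ 2 ≤ x ^ 2 + y ^ 2 := by
  have hsqrt : 0 < √c := Real.sqrt_pos.2 hc
  rcases le_total c 1 with hc₁ | hc₁
  · rw [max_eq_right (Real.le_sqrt_self_iff.2 hc₁)] at hx
    rw [min_eq_right (Real.sqrt_le_one.2 hc₁)] at hy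
    subst xstar ystar
    refine ⟨⟨hsqrt, hsqrt, Real.sqrt_le_one.2 hc₁, (Real.mul_self_sqrt hc.le).ge⟩, ?_⟩
    intro x y _ _ _ hxy
    exact sqrt_sq_add_sqrt_sq_le_of_le_mul hc.le hxy
  · rw [max_eq_left (Real.sqrt_le_self_iff.2 (Or.inr hc₁))] at hx
    rw [min_eq_left (Real.one_le_sqrt.2 hc₁)] at hy
    subst xstar ystar
    refine ⟨⟨hc, one_pos, le_rfl, (mul_one c).ge⟩, ?_⟩
    intro x y _ hy₀ hy₁ hxy
    simpa using sq_add_one_le_of_le_mul hc₁ hy₀ hy₁ hxy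
end

section
/- Let c be a real number with 0 < c < 1, and set x* = 1/(1 − √c). Then (x*, x*) is feasible, i.e. x* > 1 and (x*−1)(x*−1)/(x*·x*) ≥ c, and it minimizes the squared distance to the point (1,1) over the feasible set: for every pair of real numbers (x, y) with x > 1, y > 1 and (x−1)(y−1)/(x·y) ≥ c, one has (x−1)² + (y−1)² ≥ 2(x*−1)². -/
/-- **MinNI on the ratio scale.**  For `0 < c < 1`, set `x* = 1/(1 − √c)`.  Then
`(x*, x*)` is feasible — `x* > 1` and `(x*−1)(x*−1)/(x*·x*) ≥ c` — and minimizes the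
squared distance to the point `(1, 1)` over the feasible set
`{(x, y) : x > 1, y > 1, (x−1)(y−1)/(x·y) ≥ c}`: every feasible `(x, y)` has
`(x−1)² + (y−1)² ≥ 2(x*−1)²`. -/
theorem minNI_ratio_scale (c : ℝ) (hc : 0 < c) (hc1 : c < 1)
    (xstar : ℝ) (hx : xstar = 1 / (1 - Real.sqrt c)) :
    (1 < xstar ∧ c ≤ (xstar - 1) * (xstar - 1) / (xstar * xstar)) ∧
    ∀ x y : ℝ, 1 < x → 1 < y → c ≤ (x - 1) * (y - 1) / (x * y) →
      2 * (xstar - 1) ^ 2 ≤ (x - 1) ^ 2 + (y - 1) ^ 2 := by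
  set s := Real.sqrt c with hs
  have hs0 : 0 < s := Real.sqrt_pos.mpr hc
  have hs1 : s < 1 := by
    rw [hs, show (1:ℝ) = Real.sqrt 1 by simp]
    exact Real.sqrt_lt_sqrt hc.le hc1
  have hsc : s ^ 2 = c := Real.sq_sqrt hc.le
  have h1s : 0 < 1 - s := by linarith
  have hx1 : 1 < xstar := by
    rw [hx]
    rw [lt_div_iff₀ h1s]; linarith
  have hx0 : 0 < xstar := by linarith
  constructor
  · refine ⟨hx1, ?_⟩
    have : (xstar - 1) * (xstar - 1) / (xstar * xstar) = c := by
      have hxs : xstar * (1 - s) = 1 := by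
        rw [hx]; field_simp
      have h1 : xstar - 1 = xstar * s := by nlinarith
      rw [h1, ← hsc]
      field_simp
    linarith [this.ge]
  · intro x y hx' hy' hcon
    have hxy : 0 < x * y := by nlinarith
    have hcon' : c * (x * y) ≤ (x - 1) * (y - 1) :=
      (le_div_iff₀ hxy).mp hcon
    have hxs : xstar - 1 = s / (1 - s) := by
      rw [hx]; field_simp; ring
    rw [hxs, div_pow]
    rw [← mul_div_assoc, div_le_iff₀ (by positivity : (0:ℝ) < (1 - s) ^ 2)]
    -- goal: 2 * s ^ 2 ≤ ((x-1)^2 + (y-1)^2) * (1-s)^2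
    nlinarith [sq_nonneg (x - y), sq_nonneg ((1 - s) * (x - 1) - s),
      sq_nonneg ((1 - s) * (y - 1) - s), sq_nonneg ((1 - s) * (x + y - 2) - 2 * s),
      mul_pos (sub_pos.mpr hx') (sub_pos.mpr hy'), hsc, sq_nonneg (x*y - x - y),
      mul_pos hs0 (mul_pos (sub_pos.mpr hx') (sub_pos.mpr hy'))]
end

section
/- Let p, π₀ ∈ (0,1) and γ₁ ∈ ℝ, and set E = exp(γ₁), B = (p − π₀)·E + p + π₀ − 1, and X = ( −B + √(B² + 4·E·p·(1−p)) ) / (2·E·p). Then X > 0 and π₀/(1+X) + (1−π₀)/(1+X·E) = p. -/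
/-!
Clearing the two denominators turns the mixture equation
`π₀/(1+X) + (1−π₀)/(1+X·E) = p` into the quadratic `p·E·X² + B·X = 1 − p`.
Since `p·E > 0` and `1 − p > 0`, its discriminant exceeds `B²`, so the `+√` root
is positive.
-/

noncomputable def quadraticPosRoot (a b c : ℝ) : ℝ :=
  (-b + √(b ^ 2 + 4 * a * c)) / (2 * a)

lemma quadraticPosRoot_pos {a b c : ℝ} (ha : 0 < a) (hc : 0 < c) :
    0 < quadraticPosRoot a b c := by
  have hb : b < √(b ^ 2 + 4 * a * c) :=
    calc b ≤ |b| := le_abs_self b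
      _ = √(b ^ 2) := (Real.sqrt_sq_eq_abs b).symm
      _ < √(b ^ 2 + 4 * a * c) := Real.sqrt_lt_sqrt (sq_nonneg b) (by nlinarith [mul_pos ha hc])
  unfold quadraticPosRoot
  exact div_pos (by linarith) (by linarith)

lemma quadraticPosRoot_spec {a b c : ℝ} (ha : a ≠ 0) (hD : 0 ≤ b ^ 2 + 4 * a * c) :
    a * quadraticPosRoot a b c ^ 2 + b * quadraticPosRoot a b c = c := by
  unfold quadraticPosRoot
  set s := √(b ^ 2 + 4 * a * c)
  have hs2 : s ^ 2 = b ^ 2 + 4 * a * c := Real.sq_sqrt hD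
  field_simp
  linear_combination hs2

lemma mixture_eq_iff_quadratic {p π₀ E X : ℝ} (hX : 1 + X ≠ 0) (hXE : 1 + X * E ≠ 0) :
    π₀ / (1 + X) + (1 - π₀) / (1 + X * E) = p ↔
      p * E * X ^ 2 + ((p - π₀) * E + p + π₀ - 1) * X = 1 - p := by
  rw [div_add_div _ _ hX hXE, div_eq_iff (mul_ne_zero hX hXE)]
  constructor <;> intro h <;> linear_combination -h

theorem logistic_intercept_closed_form_general (p π₀ γ₁ : ℝ)
    (hp : 0 < p) (hp1 : p < 1)
    (E B X : ℝ)
    (hE : E = Real.exp γ₁)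
    (hB : B = (p - π₀) * E + p + π₀ - 1)
    (hX : X = (-B + Real.sqrt (B ^ 2 + 4 * E * p * (1 - p))) / (2 * E * p)) :
    0 < X ∧ π₀ / (1 + X) + (1 - π₀) / (1 + X * E) = p := by
  have hEp : 0 < p * E := mul_pos hp (hE ▸ Real.exp_pos γ₁)
  have hq : 0 < 1 - p := by linarith
  have hXroot : X = quadraticPosRoot (p * E) B (1 - p) := by
    rw [hX, quadraticPosRoot]; ring_nf
  have hXpos : 0 < X := hXroot ▸ quadraticPosRoot_pos hEp hq
  refine ⟨hXpos, ?_⟩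
  rw [mixture_eq_iff_quadratic (by positivity) (by nlinarith), ← hB, hXroot]
  exact quadraticPosRoot_spec hEp.ne' (by positivity)

/-- **Appendix A of the paper.**  For `p, π₀ ∈ (0,1)` and `γ₁ ∈ ℝ`, with
`E = exp(γ₁)`, `B = (p − π₀)E + p + π₀ − 1` and
`X = (−B + √(B² + 4·E·p·(1−p))) / (2·E·p)`, the number `X` is positive and solves
`π₀/(1+X) + (1−π₀)/(1+X·E) = p`, i.e. `X = exp(γ̂₀)` is the closed-form root of the
logistic missingness model's intercept equation. -/
theorem logistic_intercept_closed_form (p π₀ γ₁ : ℝ)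
    (hp : 0 < p) (hp1 : p < 1) (hπ : 0 < π₀) (hπ1 : π₀ < 1)
    (E B X : ℝ)
    (hE : E = Real.exp γ₁)
    (hB : B = (p - π₀) * E + p + π₀ - 1)
    (hX : X = (-B + Real.sqrt (B ^ 2 + 4 * E * p * (1 - p))) / (2 * E * p)) :
    0 < X ∧ π₀ / (1 + X) + (1 - π₀) / (1 + X * E) = p :=
  logistic_intercept_closed_form_general p π₀ γ₁ hp hp1 E B X hE hB hX
end

section
/- Let Y be an integrable real random variable, G a {0,1}-valued random variable, U a {0,1}-valued random variable, and X a random variable taking values in a countable set, on a probability space. Fix x with P(X=x)>0 and assume P(U=u, G=g, X=x) > 0 for all u,g ∈ {0,1}. Assume Y and G are conditionally independent given (X,U), i.e. for all (x',u) with P(X=x', U=u)>0 and all measurable sets A ⊆ ℝ and B ⊆ {0,1}, P(Y∈A, G∈B | X=x', U=u) = P(Y∈A | X=x', U=u)·P(G∈B | X=x', U=u). Define ED_YU(x) = E[Y|X=x, U=1] − E[Y|X=x, U=0] and RD_UG(x) = P(U=1|X=x, G=1) − P(U=1|X=x, G=0). Then |E[Y|X=x] − E[Y|X=x, G=1]|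 = |ED_YU(x) · RD_UG(x)| · P(G=0|X=x). -/
open MeasureTheory

lemma split_meas {Ω : Type*} [MeasurableSpace Ω] (P : Measure Ω)
    (V : Ω → Fin 2) (hV : Measurable V) (T : Set Ω) (hT : MeasurableSet T) :
    P T = P (V ⁻¹' {0} ∩ T) + P (V ⁻¹' {1} ∩ T) := by
  have hsplit : T = (V ⁻¹' {0} ∩ T) ∪ (V ⁻¹' {1} ∩ T) := by
    ext ω
    have h2 : V ω = 0 ∨ V ω = 1 := by omega
    simp only [Set.mem_union, Set.mem_inter_iff, Set.mem_preimage, Set.mem_singleton_iff]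
    tauto
  have hdisj : Disjoint (V ⁻¹' {0} ∩ T) (V ⁻¹' {1} ∩ T) := by
    rw [Set.disjoint_left]
    rintro ω ⟨h0, _⟩ ⟨h1, _⟩
    simp only [Set.mem_preimage, Set.mem_singleton_iff] at h0 h1
    omega
  conv_lhs => rw [hsplit]
  exact measure_union hdisj ((hV (measurableSet_singleton 1)).inter hT)

lemma split_int {Ω : Type*} [MeasurableSpace Ω] (P : Measure Ω)
    (Y : Ω → ℝ) (hYint : Integrable Y P)
    (V : Ω → Fin 2) (hV : Measurable V) (T : Set Ω) (hT : MeasurableSet T) :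
    ∫ ω in T, Y ω ∂P =
      (∫ ω in V ⁻¹' {0} ∩ T, Y ω ∂P) + ∫ ω in V ⁻¹' {1} ∩ T, Y ω ∂P := by
  have hsplit : T = (V ⁻¹' {0} ∩ T) ∪ (V ⁻¹' {1} ∩ T) := by
    ext ω
    have h2 : V ω = 0 ∨ V ω = 1 := by omega
    simp only [Set.mem_union, Set.mem_inter_iff, Set.mem_preimage, Set.mem_singleton_iff]
    tauto
  have hdisj : Disjoint (V ⁻¹' {0} ∩ T) (V ⁻¹' {1} ∩ T) := by
    rw [Set.disjoint_left]
    rintro ω ⟨h0, _⟩ ⟨h1, _⟩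
    simp only [Set.mem_preimage, Set.mem_singleton_iff] at h0 h1
    omega
  conv_lhs => rw [hsplit]
  exact setIntegral_union hdisj ((hV (measurableSet_singleton 1)).inter hT)
    hYint.integrableOn hYint.integrableOn

lemma key_transfer {Ω : Type*} [MeasurableSpace Ω] (P : Measure Ω) [IsProbabilityMeasure P]
    (Y : Ω → ℝ) (hY : Measurable Y) (hYint : Integrable Y P)
    (C₁ C₂ : Set Ω) (hC₁ : MeasurableSet C₁) (hC₂ : MeasurableSet C₂)
    (h : ∀ A : Set ℝ, MeasurableSet A →
      (P (Y ⁻¹' A ∩ C₁)).toReal * (P C₂).toReal =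
        (P (Y ⁻¹' A ∩ C₂)).toReal * (P C₁).toReal) :
    (∫ ω in C₁, Y ω ∂P) * (P C₂).toReal = (∫ ω in C₂, Y ω ∂P) * (P C₁).toReal := by
  have hmap : (((P C₂) • P.restrict C₁).map Y) = (((P C₁) • P.restrict C₂).map Y) := by
    ext A hA
    rw [Measure.map_apply hY hA, Measure.map_apply hY hA]
    simp only [Measure.smul_apply, smul_eq_mul, Measure.restrict_apply (hY hA)]
    have := h A hA
    have h1 : P (Y ⁻¹' A ∩ C₁) ≠ ⊤ := measure_ne_top P _
    have h2 : P (Y ⁻¹' A ∩ C₂) ≠ ⊤ := measure_ne_top P _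
    have h3 : P C₁ ≠ ⊤ := measure_ne_top P _
    have h4 : P C₂ ≠ ⊤ := measure_ne_top P _
    rw [← ENNReal.toReal_eq_toReal_iff' (by finiteness) (by finiteness)]
    rw [ENNReal.toReal_mul, ENNReal.toReal_mul]
    linarith [h A hA]
  have e1 := integral_map (μ := (P C₂) • P.restrict C₁) hY.aemeasurable
    (aestronglyMeasurable_id (α := ℝ))
  have e2 := integral_map (μ := (P C₁) • P.restrict C₂) hY.aemeasurable
    (aestronglyMeasurable_id (α := ℝ))
  simp only [id_eq, integral_smul_measure, smul_eq_mul] at e1 e2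
  rw [hmap, e2] at e1
  linarith

set_option maxHeartbeats 2000000 in
/-- **Section 6.3 of the paper** (covariate-conditional bias decomposition).  For a
fixed covariate value `x` with `P(X=x) > 0` and `P(U=u, G=g, X=x) > 0` for all
`u, g ∈ {0,1}`, if `Y ⫫ G | (X, U)` then, with
`ED_YU(x) = E[Y|X=x, U=1] − E[Y|X=x, U=0]` and
`RD_UG(x) = P(U=1|X=x, G=1) − P(U=1|X=x, G=0)`,
`|E[Y|X=x] − E[Y|X=x, G=1]| = |ED_YU(x)·RD_UG(x)|·P(G=0|X=x)`. -/
theorem covariate_conditional_bias_decomposition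
    {Ω χ : Type*} [MeasurableSpace Ω]
    [MeasurableSpace χ] [Countable χ] [MeasurableSingletonClass χ]
    (P : Measure Ω) [IsProbabilityMeasure P]
    (Y : Ω → ℝ) (G U : Ω → Fin 2) (X : Ω → χ)
    (hY : Measurable Y) (hYint : Integrable Y P)
    (hG : Measurable G) (hU : Measurable U) (hX : Measurable X)
    (x : χ) (hxpos : 0 < P (X ⁻¹' {x}))
    (hpos : ∀ u g : Fin 2, 0 < P (U ⁻¹' {u} ∩ G ⁻¹' {g} ∩ X ⁻¹' {x}))
    -- conditional independence of Y and G given (X, U)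
    (hCI : ∀ (x' : χ) (u : Fin 2), 0 < P (X ⁻¹' {x'} ∩ U ⁻¹' {u}) →
      ∀ (A : Set ℝ) (B : Set (Fin 2)), MeasurableSet A → MeasurableSet B →
        condPr P (Y ⁻¹' A ∩ G ⁻¹' B) (X ⁻¹' {x'} ∩ U ⁻¹' {u}) =
          condPr P (Y ⁻¹' A) (X ⁻¹' {x'} ∩ U ⁻¹' {u}) *
            condPr P (G ⁻¹' B) (X ⁻¹' {x'} ∩ U ⁻¹' {u}))
    (ED_YU RD_UG : ℝ)
    (hED : ED_YU = condMean P Y (X ⁻¹' {x} ∩ U ⁻¹' {1}) -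
      condMean P Y (X ⁻¹' {x} ∩ U ⁻¹' {0}))
    (hRD : RD_UG = condPr P (U ⁻¹' {1}) (X ⁻¹' {x} ∩ G ⁻¹' {1}) -
      condPr P (U ⁻¹' {1}) (X ⁻¹' {x} ∩ G ⁻¹' {0})) :
    |condMean P Y (X ⁻¹' {x}) - condMean P Y (X ⁻¹' {x} ∩ G ⁻¹' {1})| =
      |ED_YU * RD_UG| * condPr P (G ⁻¹' {0}) (X ⁻¹' {x}) := by
  set S := X ⁻¹' {x} with hSdef
  have mS : MeasurableSet S := hX (measurableSet_singleton x)
  have mU : ∀ u : Fin 2, MeasurableSet (U ⁻¹' {u}) :=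
    fun u => hU (measurableSet_singleton u)
  have mG : ∀ g : Fin 2, MeasurableSet (G ⁻¹' {g}) :=
    fun g => hG (measurableSet_singleton g)
  -- notation for cells
  set q : Fin 2 → Fin 2 → ℝ :=
    fun u g => (P (U ⁻¹' {u} ∩ G ⁻¹' {g} ∩ S)).toReal with hqdef
  set I : Fin 2 → Fin 2 → ℝ :=
    fun u g => ∫ ω in U ⁻¹' {u} ∩ G ⁻¹' {g} ∩ S, Y ω ∂P with hIdef
  have hq : ∀ u g, 0 < q u g := fun u g =>
    ENNReal.toReal_pos (hpos u g).ne' (measure_ne_top _ _)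
  -- positivity of S ∩ U⁻¹{u}
  have hC2pos : ∀ u : Fin 2, 0 < P (S ∩ U ⁻¹' {u}) := by
    intro u
    refine lt_of_lt_of_le (hpos u 0) (measure_mono ?_)
    intro ω ⟨⟨h1, _⟩, h3⟩; exact ⟨h3, h1⟩
  have ht : ∀ u : Fin 2, 0 < (P (S ∩ U ⁻¹' {u})).toReal := fun u =>
    ENNReal.toReal_pos (hC2pos u).ne' (measure_ne_top _ _)
  -- split P(S ∩ U=u) over G
  have hUS : ∀ u : Fin 2, (P (S ∩ U ⁻¹' {u})).toReal = q u 0 + q u 1 := by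
    intro u
    have h := split_meas P G hG (S ∩ U ⁻¹' {u}) (mS.inter (mU u))
    have e0 : G ⁻¹' {0} ∩ (S ∩ U ⁻¹' {u}) = U ⁻¹' {u} ∩ G ⁻¹' {0} ∩ S := by
      ext ω; simp only [Set.mem_inter_iff, Set.mem_preimage, Set.mem_singleton_iff]; tauto
    have e1 : G ⁻¹' {1} ∩ (S ∩ U ⁻¹' {u}) = U ⁻¹' {u} ∩ G ⁻¹' {1} ∩ S := by
      ext ω; simp only [Set.mem_inter_iff, Set.mem_preimage, Set.mem_singleton_iff]; tauto
    rw [e0, e1] at h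
    rw [h, ENNReal.toReal_add (measure_ne_top _ _) (measure_ne_top _ _)]
  -- split P(S) over U
  have hPS : (P S).toReal = q 0 0 + q 0 1 + (q 1 0 + q 1 1) := by
    have h := split_meas P U hU S mS
    have h0 : (P (U ⁻¹' ({0} : Set (Fin 2)) ∩ S)).toReal = q 0 0 + q 0 1 := by
      rw [show U ⁻¹' ({0} : Set (Fin 2)) ∩ S = S ∩ U ⁻¹' {0} from Set.inter_comm _ _]
      exact hUS 0
    have h1 : (P (U ⁻¹' ({1} : Set (Fin 2)) ∩ S)).toReal = q 1 0 + q 1 1 := by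
      rw [show U ⁻¹' ({1} : Set (Fin 2)) ∩ S = S ∩ U ⁻¹' {1} from Set.inter_comm _ _]
      exact hUS 1
    rw [h, ENNReal.toReal_add (measure_ne_top _ _) (measure_ne_top _ _), h0, h1]
  -- split P(S ∩ G=g) over U
  have hSG : ∀ g : Fin 2, (P (S ∩ G ⁻¹' {g})).toReal = q 0 g + q 1 g := by
    intro g
    have h := split_meas P U hU (S ∩ G ⁻¹' {g}) (mS.inter (mG g))
    have e0 : U ⁻¹' ({0} : Set (Fin 2)) ∩ (S ∩ G ⁻¹' {g}) = U ⁻¹' {0} ∩ G ⁻¹' {g} ∩ S := by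
      ext ω; simp only [Set.mem_inter_iff, Set.mem_preimage, Set.mem_singleton_iff]; tauto
    have e1 : U ⁻¹' ({1} : Set (Fin 2)) ∩ (S ∩ G ⁻¹' {g}) = U ⁻¹' {1} ∩ G ⁻¹' {g} ∩ S := by
      ext ω; simp only [Set.mem_inter_iff, Set.mem_preimage, Set.mem_singleton_iff]; tauto
    rw [h, ENNReal.toReal_add (measure_ne_top _ _) (measure_ne_top _ _), e0, e1]
  -- P(G=0 ∩ S)
  have hG0S : (P (G ⁻¹' {0} ∩ S)).toReal = q 0 0 + q 1 0 := by
    rw [show G ⁻¹' ({0} : Set (Fin 2)) ∩ S = S ∩ G ⁻¹' {0} from Set.inter_comm _ _]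
    exact hSG 0
  -- P(U=1 ∩ (S ∩ G=g))
  have hU1SG : ∀ g : Fin 2,
      (P (U ⁻¹' {1} ∩ (S ∩ G ⁻¹' {g}))).toReal = q 1 g := by
    intro g
    have e : U ⁻¹' ({1} : Set (Fin 2)) ∩ (S ∩ G ⁻¹' {g}) = U ⁻¹' {1} ∩ G ⁻¹' {g} ∩ S := by
      ext ω; simp only [Set.mem_inter_iff, Set.mem_preimage, Set.mem_singleton_iff]; tauto
    rw [e]
  -- integral splits
  have hISU : ∀ u : Fin 2, (∫ ω in S ∩ U ⁻¹' {u}, Y ω ∂P) = I u 0 + I u 1 := by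
    intro u
    have h := split_int P Y hYint G hG (S ∩ U ⁻¹' {u}) (mS.inter (mU u))
    have e0 : G ⁻¹' ({0} : Set (Fin 2)) ∩ (S ∩ U ⁻¹' {u}) = U ⁻¹' {u} ∩ G ⁻¹' {0} ∩ S := by
      ext ω; simp only [Set.mem_inter_iff, Set.mem_preimage, Set.mem_singleton_iff]; tauto
    have e1 : G ⁻¹' ({1} : Set (Fin 2)) ∩ (S ∩ U ⁻¹' {u}) = U ⁻¹' {u} ∩ G ⁻¹' {1} ∩ S := by
      ext ω; simp only [Set.mem_inter_iff, Set.mem_preimage, Set.mem_singleton_iff]; tauto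
    rw [e0, e1] at h
    exact h
  have hIS : (∫ ω in S, Y ω ∂P) = I 0 0 + I 0 1 + (I 1 0 + I 1 1) := by
    have h := split_int P Y hYint U hU S mS
    have e0 : U ⁻¹' ({0} : Set (Fin 2)) ∩ S = S ∩ U ⁻¹' {0} := Set.inter_comm _ _
    have e1 : U ⁻¹' ({1} : Set (Fin 2)) ∩ S = S ∩ U ⁻¹' {1} := Set.inter_comm _ _
    rw [e0, e1, hISU 0, hISU 1] at h
    exact h
  have hISG1 : (∫ ω in S ∩ G ⁻¹' {1}, Y ω ∂P) = I 0 1 + I 1 1 := by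
    have h := split_int P Y hYint U hU (S ∩ G ⁻¹' {1}) (mS.inter (mG 1))
    have e0 : U ⁻¹' ({0} : Set (Fin 2)) ∩ (S ∩ G ⁻¹' {1}) = U ⁻¹' {0} ∩ G ⁻¹' {1} ∩ S := by
      ext ω; simp only [Set.mem_inter_iff, Set.mem_preimage, Set.mem_singleton_iff]; tauto
    have e1 : U ⁻¹' ({1} : Set (Fin 2)) ∩ (S ∩ G ⁻¹' {1}) = U ⁻¹' {1} ∩ G ⁻¹' {1} ∩ S := by
      ext ω; simp only [Set.mem_inter_iff, Set.mem_preimage, Set.mem_singleton_iff]; tauto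
    rw [e0, e1] at h
    exact h
  -- key conditional independence consequence: I u g = m u * q u g
  have hkey : ∀ u g : Fin 2,
      I u g * (P (S ∩ U ⁻¹' {u})).toReal = (∫ ω in S ∩ U ⁻¹' {u}, Y ω ∂P) * q u g := by
    intro u g
    apply key_transfer P Y hY hYint _ _ (((mU u).inter (mG g)).inter mS) (mS.inter (mU u))
    intro A hA
    have hci := hCI x u (hC2pos u) A {g} hA (measurableSet_singleton g)
    unfold condPr at hci
    have e0 : Y ⁻¹' A ∩ G ⁻¹' {g} ∩ (S ∩ U ⁻¹' {u}) =
        Y ⁻¹' A ∩ (U ⁻¹' {u} ∩ G ⁻¹' {g} ∩ S) := by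
      ext ω; simp only [Set.mem_inter_iff, Set.mem_preimage, Set.mem_singleton_iff]; tauto
    have e1 : G ⁻¹' {g} ∩ (S ∩ U ⁻¹' {u}) = U ⁻¹' {u} ∩ G ⁻¹' {g} ∩ S := by
      ext ω; simp only [Set.mem_inter_iff, Set.mem_preimage, Set.mem_singleton_iff]; tauto
    rw [e0, e1] at hci
    have htu := (ht u).ne'
    rw [← hSdef] at hci
    field_simp at hci
    nlinarith [hci, ht u]
  have hm : ∀ u g : Fin 2,
      I u g = (∫ ω in S ∩ U ⁻¹' {u}, Y ω ∂P) / (q u 0 + q u 1) * q u g := by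
    intro u g
    have h := hkey u g
    rw [hUS u] at h
    have hne : (0:ℝ) < q u 0 + q u 1 := by linarith [hq u 0, hq u 1]
    rw [div_mul_eq_mul_div, eq_div_iff hne.ne']
    linarith
  -- nonzero denominators
  have hPSpos : 0 < (P S).toReal :=
    ENNReal.toReal_pos hxpos.ne' (measure_ne_top _ _)
  have hSG1pos : 0 < (P (S ∩ G ⁻¹' {1})).toReal := by
    rw [hSG 1]; linarith [hq 0 1, hq 1 1]
  have hSG0pos : 0 < (P (S ∩ G ⁻¹' {0})).toReal := by
    rw [hSG 0]; linarith [hq 0 0, hq 1 0]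
  -- main algebraic identity
  have inner : condMean P Y S - condMean P Y (S ∩ G ⁻¹' {1}) =
      -(ED_YU * RD_UG * condPr P (G ⁻¹' {0}) S) := by
    rw [hED, hRD]
    unfold condMean condPr
    rw [hIS, hISG1, hm 0 0, hm 0 1, hm 1 0, hm 1 1, hPS, hSG 1,
      hU1SG 0, hU1SG 1, hSG 0, hG0S, hUS 0, hUS 1]
    set J0 := ∫ ω in S ∩ U ⁻¹' {0}, Y ω ∂P
    set J1 := ∫ ω in S ∩ U ⁻¹' {1}, Y ω ∂P
    have h00 := hq 0 0; have h01 := hq 0 1; have h10 := hq 1 0; have h11 := hq 1 1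
    have d1 : q 0 0 + q 0 1 + (q 1 0 + q 1 1) ≠ 0 := by linarith
    have d2 : q 0 1 + q 1 1 ≠ 0 := by linarith
    have d3 : q 0 0 + q 1 0 ≠ 0 := by linarith
    have d4 : (q 0 0 + q 0 1 : ℝ) ≠ 0 := by linarith
    have d5 : (q 1 0 + q 1 1 : ℝ) ≠ 0 := by linarith
    field_simp
    ring
  rw [inner, abs_neg, abs_mul]
  congr 1
  rw [abs_of_nonneg]
  unfold condPr
  positivity
end
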